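/- arXiv:2109.14176 — 11 statements merged into one kernel-verified Lean document; each statement's English description precedes it below -/
import Mathlib

section
/- If r'(x) is invertible and r(x) ≠ 0, then the AA(1) coefficient function β is not continuous at the point (x, x): there exists a unit vector e such that |β(x, x + εe)| → ∞ as ε → 0⁺. -/
/-!
Choose `e` with `r'(x) e` a positive multiple of `r(x)` (possible since `r'(x)` is onto). Then
`r(x + εe) - r(x) = ε (r'(x) e + o(1))`, so `β(x, x + εe) ≈ -⟪r(x), r'(x) e⟫ / (ε ‖r'(x) e‖²)`,
whose numerator is nonzero, and `|β|` blows up like `1/|ε|`.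
-/

open scoped RealInnerProductSpace Topology
open Filter

noncomputable section

abbrev E (n : ℕ) := EuclideanSpace ℝ (Fin n)

/-- The residual `r(x) = x - q(x)`. -/
def rr {n : ℕ} (q : E n → E n) (x : E n) : E n := x - q x

open Classical in
/-- The AA(1) coefficient `β(x,y)`. -/
def beta {n : ℕ} (q : E n → E n) (p : E n × E n) : ℝ :=
  if rr q p.1 = rr q p.2 then 0
  else -⟪rr q p.1, rr q p.1 - rr q p.2⟫ / ‖rr q p.1 - rr q p.2‖ ^ 2

/-- The AA(1) fixed-point iteration map `Ψ(x,y) = (q(x) + β(x,y)(q(x)-q(y)), x)`. -/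
def Psi {n : ℕ} (q : E n → E n) (p : E n × E n) : E n × E n :=
  (q p.1 + beta q p • (q p.1 - q p.2), p.1)

/-- Euclidean norm on the product `ℝⁿ × ℝⁿ ≅ ℝ²ⁿ`. -/
def pnorm {n : ℕ} (p : E n × E n) : ℝ := Real.sqrt (‖p.1‖ ^ 2 + ‖p.2‖ ^ 2)

section

variable {F : Type*} [NormedAddCommGroup F] [InnerProductSpace ℝ F]

lemma abs_inner_smul_div_norm_smul_sq (a d : F) (t : ℝ) :
    |⟪a, t • d⟫| / ‖t • d‖ ^ 2 = |t|⁻¹ * (|⟪a, d⟫| / ‖d‖ ^ 2) := by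
  rw [real_inner_smul_right, norm_smul, Real.norm_eq_abs, abs_mul, mul_pow]
  rcases eq_or_ne t 0 with rfl | ht
  · simp
  have ht' : |t| ≠ 0 := abs_ne_zero.mpr ht
  rw [pow_two |t|, mul_assoc, mul_div_mul_left _ _ ht', div_mul_eq_div_div, inv_mul_eq_div,
    div_div, div_div, mul_comm]

-- Since `f t - f 0 = t • slope f 0 t`, the quotient is `|t|⁻¹` times a factor
-- tending to `|⟪a, v⟫| / ‖v‖² > 0`.
theorem tendsto_abs_inner_sub_div_norm_sub_sq_atTop {f : ℝ → F} {v : F} (a : F)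
    (hf : HasDerivAt f v 0) (hav : ⟪a, v⟫ ≠ 0) :
    Tendsto (fun t => |⟪a, f t - f 0⟫| / ‖f t - f 0‖ ^ 2) (𝓝[≠] 0) atTop := by
  have hv : v ≠ 0 := by rintro rfl; exact hav (inner_zero_right a)
  have hslope : Tendsto (slope f 0) (𝓝[≠] 0) (𝓝 v) := hasDerivAt_iff_tendsto_slope.mp hf
  have hfactor : Tendsto (fun t => |⟪a, slope f 0 t⟫| / ‖slope f 0 t‖ ^ 2) (𝓝[≠] 0)
      (𝓝 (|⟪a, v⟫| / ‖v‖ ^ 2)) :=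
    (tendsto_const_nhds.inner hslope).abs.div (hslope.norm.pow 2) (by simpa using hv)
  have hpos : 0 < |⟪a, v⟫| / ‖v‖ ^ 2 := by positivity
  have hinv : Tendsto (fun t : ℝ => |t|⁻¹) (𝓝[≠] 0) atTop :=
    tendsto_inv_nhdsGT_zero.comp tendsto_abs_nhdsNE_zero
  refine (hinv.atTop_mul_pos hpos hfactor).congr' ?_
  filter_upwards [self_mem_nhdsWithin] with t ht
  rw [← abs_inner_smul_div_norm_smul_sq, slope_def_module, sub_zero,
    smul_inv_smul₀ (show t ≠ 0 from ht)]

end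

lemma abs_beta {n : ℕ} (q : E n → E n) (x y : E n) :
    |beta q (x, y)| = |⟪rr q x, rr q y - rr q x⟫| / ‖rr q y - rr q x‖ ^ 2 := by
  unfold beta
  split_ifs with h
  · simp [h]
  · rw [abs_div, abs_neg, abs_of_nonneg (sq_nonneg ‖_‖), ← neg_sub (rr q y), inner_neg_right,
      abs_neg, norm_neg]

/-- if `r'(x)` is invertible and `r(x) ≠ 0`, then `β` is not continuous at
`(x,x)`: there is a unit direction `e` along which `|β(x, x+εe)| → ∞` as `ε → 0`. -/
theorem stmt1 {n : ℕ} (q : E n → E n) (hq : ContDiff ℝ 1 q) (x : E n)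
    (hinv : Function.Bijective (fderiv ℝ (rr q) x)) (hrx : rr q x ≠ 0) :
    ∃ e : E n, ‖e‖ = 1 ∧
      Tendsto (fun ε : ℝ => |beta q (x, x + ε • e)|) (𝓝[≠] 0) atTop := by
  set A := fderiv ℝ (rr q) x
  obtain ⟨v, hv⟩ := hinv.2 (rr q x)
  have hv0 : v ≠ 0 := by rintro rfl; exact hrx (by simpa using hv.symm)
  set e := ‖v‖⁻¹ • v
  have hAe : A e = ‖v‖⁻¹ • rr q x := by rw [map_smul, hv]
  have hr : HasFDerivAt (rr q) A x :=
    (differentiableAt_id.sub (hq.differentiable one_ne_zero x)).hasFDerivAt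
  have hline : HasDerivAt (fun ε : ℝ => x + ε • e) e 0 := by
    simpa using ((hasDerivAt_id (0 : ℝ)).smul_const e).const_add x
  have hcurve : HasDerivAt (fun ε : ℝ => rr q (x + ε • e)) (A e) 0 :=
    hr.comp_hasDerivAt_of_eq 0 hline (by simp)
  have hinner : ⟪rr q x, A e⟫ ≠ 0 := by
    rw [hAe, real_inner_smul_right, real_inner_self_eq_norm_sq]
    exact mul_ne_zero (by simpa using hv0) (by simpa using hrx)
  refine ⟨e, by simp [e, norm_smul, hv0], ?_⟩
  simpa [abs_beta] using tendsto_abs_inner_sub_div_norm_sub_sq_atTop (rr q x) hcurve hinner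
end
end

section
/- Let x* be a fixed point of q (so r(x*) = 0) with A = r'(x*) invertible. For directions d₁ ≠ d₂ with q differentiable at x*, the radial limit of the AA(1) coefficient satisfies lim_{ε→0} β(x* + ε d₁, x* + ε d₂) = -⟨A d₁, A(d₁ - d₂)⟩ / ‖A(d₁ - d₂)‖². In particular the limit depends on (d₁, d₂), so β is not continuous at (x*, x*). -/
open scoped RealInnerProductSpace Topology
open Filter

noncomputable section

/-- radial limits of the AA(1) coefficient at the fixed point. -/
theorem stmt2 {n : ℕ} (hn : 0 < n) (q : E n → E n) (xs : E n) (hfix : q xs = xs)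
    (M : E n →L[ℝ] E n) (hM : HasFDerivAt q M xs)
    (A : E n →L[ℝ] E n) (hA : A = ContinuousLinearMap.id ℝ (E n) - M)
    (hAinv : Function.Bijective A) :
    (∀ d₁ d₂ : E n, d₁ ≠ d₂ →
      Tendsto (fun ε : ℝ => beta q (xs + ε • d₁, xs + ε • d₂)) (𝓝[≠] 0)
        (𝓝 (-⟪A d₁, A (d₁ - d₂)⟫ / ‖A (d₁ - d₂)‖ ^ 2))) ∧
    ¬ ContinuousAt (beta q) (xs, xs) := by
  have hr : HasFDerivAt (rr q) A xs := by
    have h := (hasFDerivAt_id xs).sub hM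
    rw [hA]
    exact h
  have hr0 : rr q xs = 0 := by simp [rr, hfix]
  have key : ∀ d : E n, Tendsto (fun ε : ℝ => ε⁻¹ • rr q (xs + ε • d)) (𝓝[≠] (0:ℝ))
      (𝓝 (A d)) := by
    intro d
    have h1 : HasDerivAt (fun ε : ℝ => xs + ε • d) d 0 := by
      simpa using ((hasDerivAt_id (0:ℝ)).smul_const d).const_add xs
    have hline : HasDerivAt (fun ε : ℝ => rr q (xs + ε • d)) (A d) 0 := by
      have hr' : HasFDerivAt (rr q) A (xs + (0:ℝ) • d) := by simpa using hr
      exact hr'.comp_hasDerivAt 0 h1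
    have h3 := hasDerivAt_iff_tendsto_slope.mp hline
    have : (slope (fun ε : ℝ => rr q (xs + ε • d)) 0)
        = fun ε : ℝ => ε⁻¹ • rr q (xs + ε • d) := by
      funext ε
      simp [slope_def_module, hr0]
    rwa [this] at h3
  have main : ∀ d₁ d₂ : E n, d₁ ≠ d₂ →
      Tendsto (fun ε : ℝ => beta q (xs + ε • d₁, xs + ε • d₂)) (𝓝[≠] 0)
        (𝓝 (-⟪A d₁, A (d₁ - d₂)⟫ / ‖A (d₁ - d₂)‖ ^ 2)) := by
    intro d₁ d₂ hne
    have hAd : A (d₁ - d₂) ≠ 0 := by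
      intro h
      apply hne
      have := hAinv.injective (a₁ := d₁ - d₂) (a₂ := 0) (by simpa using h)
      exact sub_eq_zero.mp this
    set g₁ : ℝ → E n := fun ε => ε⁻¹ • rr q (xs + ε • d₁) with hg₁
    set g₂ : ℝ → E n := fun ε => ε⁻¹ • rr q (xs + ε • d₂) with hg₂
    have h1 : Tendsto g₁ (𝓝[≠] (0:ℝ)) (𝓝 (A d₁)) := key d₁
    have h2 : Tendsto g₂ (𝓝[≠] (0:ℝ)) (𝓝 (A d₂)) := key d₂
    have hsub : Tendsto (fun ε => g₁ ε - g₂ ε) (𝓝[≠] (0:ℝ)) (𝓝 (A d₁ - A d₂)) := h1.sub h2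
    have hAd' : A d₁ - A d₂ ≠ 0 := by rwa [← map_sub]
    have hev : ∀ᶠ ε in 𝓝[≠] (0:ℝ), g₁ ε - g₂ ε ≠ 0 := hsub.eventually_ne hAd'
    have heq : ∀ᶠ ε in 𝓝[≠] (0:ℝ),
        beta q (xs + ε • d₁, xs + ε • d₂)
          = -⟪g₁ ε, g₁ ε - g₂ ε⟫ / ‖g₁ ε - g₂ ε‖ ^ 2 := by
      filter_upwards [hev, self_mem_nhdsWithin] with ε hε1 hε2
      have hε : (ε : ℝ) ≠ 0 := hε2
      have hrne : rr q (xs + ε • d₁) ≠ rr q (xs + ε • d₂) := by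
        intro h
        apply hε1
        simp [hg₁, hg₂, h]
      have hwne : rr q (xs + ε • d₁) - rr q (xs + ε • d₂) ≠ 0 := sub_ne_zero.mpr hrne
      have hwnorm : ‖rr q (xs + ε • d₁) - rr q (xs + ε • d₂)‖ ≠ 0 := norm_ne_zero_iff.mpr hwne
      simp only [beta, if_neg hrne, hg₁, hg₂, ← smul_sub]
      rw [real_inner_smul_left, real_inner_smul_right, norm_smul]
      rw [mul_pow]
      have hεnorm : ‖ε⁻¹‖ ^ 2 = ε⁻¹ * ε⁻¹ := by
        rw [Real.norm_eq_abs, sq_abs]; ring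
      rw [hεnorm]
      field_simp
    have hnum : Tendsto (fun ε => -⟪g₁ ε, g₁ ε - g₂ ε⟫) (𝓝[≠] (0:ℝ))
        (𝓝 (-⟪A d₁, A d₁ - A d₂⟫)) := (h1.inner hsub).neg
    have hden : Tendsto (fun ε => ‖g₁ ε - g₂ ε‖ ^ 2) (𝓝[≠] (0:ℝ))
        (𝓝 (‖A d₁ - A d₂‖ ^ 2)) := hsub.norm.pow 2
    have hdne : ‖A d₁ - A d₂‖ ^ 2 ≠ 0 := pow_ne_zero 2 (norm_ne_zero_iff.mpr hAd')
    have hdiv := hnum.div hden hdne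
    rw [← map_sub] at hdiv
    exact Filter.Tendsto.congr' (Filter.EventuallyEq.symm heq) hdiv
  refine ⟨main, ?_⟩
  intro hcont
  -- choose a nonzero direction
  set d : E n := EuclideanSpace.single ⟨0, hn⟩ (1:ℝ) with hd
  have hdne : d ≠ 0 := by
    intro h
    have := congrFun (congrArg (fun v : E n => (v : Fin n → ℝ)) h) ⟨0, hn⟩
    simp [hd] at this
  have hAdne : A d ≠ 0 := by
    intro h
    exact hdne (hAinv.injective (a₁ := d) (a₂ := 0) (by simpa using h))
  have hlim := main d 0 hdne
  have hval : -⟪A d, A (d - 0)⟫ / ‖A (d - 0)‖ ^ 2 = -1 := by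
    rw [sub_zero, real_inner_self_eq_norm_sq]
    have : ‖A d‖ ^ 2 ≠ 0 := pow_ne_zero 2 (norm_ne_zero_iff.mpr hAdne)
    field_simp
  rw [hval] at hlim
  -- continuity gives limit 0 along the same path
  have hpath : Tendsto (fun ε : ℝ => ((xs + ε • d, xs + ε • (0:E n)) : E n × E n))
      (𝓝[≠] (0:ℝ)) (𝓝 (xs, xs)) := by
    have hc1 : Continuous fun ε : ℝ => xs + ε • d :=
      continuous_const.add (continuous_id.smul continuous_const)
    have hc2 : Continuous fun ε : ℝ => xs + ε • (0:E n) :=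
      continuous_const.add (continuous_id.smul continuous_const)
    have hc : Continuous (fun ε : ℝ => ((xs + ε • d, xs + ε • (0:E n)) : E n × E n)) :=
      hc1.prodMk hc2
    have := hc.tendsto 0
    simp only [zero_smul, add_zero] at this
    exact this.mono_left nhdsWithin_le_nhds
  have hbeta0 : beta q (xs, xs) = 0 := by simp [beta]
  have hlim0 : Tendsto (fun ε : ℝ => beta q (xs + ε • d, xs + ε • (0:E n)))
      (𝓝[≠] (0:ℝ)) (𝓝 0) := by
    have := hcont.tendsto.comp hpath
    rwa [hbeta0] at this
  have : (-1 : ℝ) = 0 := tendsto_nhds_unique hlim hlim0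
  norm_num at this
end
end

section
/- Under the assumptions that q is continuously differentiable near x*, r(x*) = 0, and r'(x*) is invertible, the AA(1) map Ψ is locally Lipschitz at z* = (x*, x*): there exist δ > 0 and L > 0 such that ‖Ψ(z* + d) - Ψ(z*)‖ ≤ L‖d‖ for all d ∈ ℝ²ⁿ with ‖d‖ < δ. Moreover one may take L = 3 + (4 + 4/c_r)‖r'(x*)‖, where c_r > 0 is any constant with c_r² ≤ λ_min(r'(x)ᵀ r'(x)) for all x near x*. -/
open scoped RealInnerProductSpace Topology
open Filter

noncomputable section

/-! Near `x*`, `r` is Lipschitz with constant `‖r'(x*)‖ + c` and expands distances by at least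
`c_r - c`, for any small `c > 0` (strict differentiability). Cauchy–Schwarz gives
`|β(x,y)| ‖r(x) - r(y)‖ ≤ ‖r(x)‖`, and the lower bound converts this into
`|β(x,y)| ‖x - y‖ ≤ ‖r(x)‖ / (c_r - c)`; so `β (q(x) - q(y))`, and with it
`Ψ(z* + d) - Ψ(z*)`, is bounded by a multiple of `‖r(x* + d₁)‖ ≤ (‖r'(x*)‖ + c) ‖d₁‖`.
The choice `c = c_r / (2 (c_r + 1))` brings the constant below `3 + (4 + 4/c_r) ‖r'(x*)‖`. -/

open scoped NNReal
open Metric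

section ApproximatesLinearOn

variable {F G : Type*} [NormedAddCommGroup F] [NormedSpace ℝ F]
  [NormedAddCommGroup G] [NormedSpace ℝ G]
  {f : F → G} {A : F →L[ℝ] G} {s : Set F} {c : ℝ≥0} {a b : F}

theorem ApproximatesLinearOn.norm_image_sub_le (hf : ApproximatesLinearOn f A s c)
    (ha : a ∈ s) (hb : b ∈ s) : ‖f a - f b‖ ≤ (‖A‖ + c) * ‖a - b‖ :=
  calc ‖f a - f b‖ = ‖A (a - b) + (f a - f b - A (a - b))‖ := by rw [add_sub_cancel]
    _ ≤ ‖A (a - b)‖ + ‖f a - f b - A (a - b)‖ := norm_add_le _ _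
    _ ≤ ‖A‖ * ‖a - b‖ + c * ‖a - b‖ := add_le_add (A.le_opNorm _) (hf a ha b hb)
    _ = (‖A‖ + c) * ‖a - b‖ := by ring

theorem ApproximatesLinearOn.mul_norm_sub_le_norm_image_sub
    (hf : ApproximatesLinearOn f A s c) {m : ℝ} (hA : ∀ v, m * ‖v‖ ≤ ‖A v‖)
    (ha : a ∈ s) (hb : b ∈ s) :
    (m - c) * ‖a - b‖ ≤ ‖f a - f b‖ := by
  have hmain : ‖A (a - b)‖ ≤ ‖f a - f b‖ + c * ‖a - b‖ :=
    calc ‖A (a - b)‖ = ‖(f a - f b) - (f a - f b - A (a - b))‖ := by rw [sub_sub_cancel]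
      _ ≤ ‖f a - f b‖ + ‖f a - f b - A (a - b)‖ := norm_sub_le _ _
      _ ≤ ‖f a - f b‖ + c * ‖a - b‖ := by gcongr; exact hf a ha b hb
  linarith [hA (a - b)]

end ApproximatesLinearOn

section pnorm

variable {n : ℕ}

theorem pnorm_nonneg (p : E n × E n) : 0 ≤ pnorm p := Real.sqrt_nonneg _

theorem norm_fst_le_pnorm (p : E n × E n) : ‖p.1‖ ≤ pnorm p :=
  Real.le_sqrt_of_sq_le (le_add_of_nonneg_right (sq_nonneg _))

theorem norm_snd_le_pnorm (p : E n × E n) : ‖p.2‖ ≤ pnorm p :=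
  Real.le_sqrt_of_sq_le (le_add_of_nonneg_left (sq_nonneg _))

theorem pnorm_le_norm_add_norm (p : E n × E n) : pnorm p ≤ ‖p.1‖ + ‖p.2‖ :=
  Real.sqrt_le_iff.2 ⟨by positivity, by nlinarith [norm_nonneg p.1, norm_nonneg p.2]⟩

end pnorm

section AA1

variable {n : ℕ} (q : E n → E n)

theorem sub_rr (x : E n) : x - rr q x = q x := sub_sub_cancel _ _

theorem rr_eq_zero_of_fixed {x : E n} (hx : q x = x) : rr q x = 0 := sub_eq_zero.2 hx.symm

theorem Psi_of_fixed {x : E n} (hx : q x = x) : Psi q (x, x) = (x, x) := by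
  simp [Psi, hx]

theorem sub_eq_sub_sub_rr_sub (a b : E n) : q a - q b = (a - b) - (rr q a - rr q b) := by
  simp only [rr]; abel

theorem abs_beta_mul_norm_rr_sub_le (p : E n × E n) :
    |beta q p| * ‖rr q p.1 - rr q p.2‖ ≤ ‖rr q p.1‖ := by
  unfold beta
  split_ifs with h
  · simp
  · have hpos : 0 < ‖rr q p.1 - rr q p.2‖ := norm_pos_iff.2 (sub_ne_zero.2 h)
    rw [abs_div, abs_neg, abs_of_pos (pow_pos hpos 2), div_mul_eq_mul_div,
      div_le_iff₀ (by positivity)]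
    calc |⟪rr q p.1, rr q p.1 - rr q p.2⟫| * ‖rr q p.1 - rr q p.2‖
        ≤ ‖rr q p.1‖ * ‖rr q p.1 - rr q p.2‖ * ‖rr q p.1 - rr q p.2‖ := by
          gcongr; exact abs_real_inner_le_norm _ _
      _ = ‖rr q p.1‖ * ‖rr q p.1 - rr q p.2‖ ^ 2 := by ring

theorem norm_beta_smul_sub_le {m : ℝ} (hm : 0 < m) {p : E n × E n}
    (hp : m * ‖p.1 - p.2‖ ≤ ‖rr q p.1 - rr q p.2‖) :
    ‖beta q p • (q p.1 - q p.2)‖ ≤ (1 + 1 / m) * ‖rr q p.1‖ := by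
  have hβ := abs_beta_mul_norm_rr_sub_le q p
  have hβ' : |beta q p| * ‖p.1 - p.2‖ ≤ ‖rr q p.1‖ / m := by
    rw [le_div_iff₀ hm]
    calc |beta q p| * ‖p.1 - p.2‖ * m = |beta q p| * (m * ‖p.1 - p.2‖) := by ring
      _ ≤ |beta q p| * ‖rr q p.1 - rr q p.2‖ := by gcongr
      _ ≤ ‖rr q p.1‖ := hβ
  calc ‖beta q p • (q p.1 - q p.2)‖
      = |beta q p| * ‖(p.1 - p.2) - (rr q p.1 - rr q p.2)‖ := by
        rw [norm_smul, Real.norm_eq_abs, sub_eq_sub_sub_rr_sub]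
    _ ≤ |beta q p| * (‖p.1 - p.2‖ + ‖rr q p.1 - rr q p.2‖) := by
        gcongr; exact norm_sub_le _ _
    _ ≤ ‖rr q p.1‖ / m + ‖rr q p.1‖ := by rw [mul_add]; exact add_le_add hβ' hβ
    _ = (1 + 1 / m) * ‖rr q p.1‖ := by ring

theorem norm_Psi_fst_sub_le (x : E n) {m : ℝ} (hm : 0 < m) {p : E n × E n}
    (hp : m * ‖p.1 - p.2‖ ≤ ‖rr q p.1 - rr q p.2‖) :
    ‖(Psi q p).1 - x‖ ≤ ‖p.1 - x‖ + (2 + 1 / m) * ‖rr q p.1‖ := by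
  have hsplit : (Psi q p).1 - x = (p.1 - x) - rr q p.1 + beta q p • (q p.1 - q p.2) := by
    simp only [Psi, ← sub_rr q p.1]; abel
  rw [hsplit]
  calc ‖(p.1 - x) - rr q p.1 + beta q p • (q p.1 - q p.2)‖
      ≤ ‖p.1 - x‖ + ‖rr q p.1‖ + ‖beta q p • (q p.1 - q p.2)‖ :=
        (norm_add_le _ _).trans (by gcongr; exact norm_sub_le _ _)
    _ ≤ ‖p.1 - x‖ + ‖rr q p.1‖ + (1 + 1 / m) * ‖rr q p.1‖ := by
        gcongr; exact norm_beta_smul_sub_le q hm hp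
    _ = ‖p.1 - x‖ + (2 + 1 / m) * ‖rr q p.1‖ := by ring

theorem pnorm_Psi_sub_le {xs : E n} (hfix : q xs = xs) {A : E n →L[ℝ] E n} {ρ : ℝ}
    {c : ℝ≥0} (hf : ApproximatesLinearOn (rr q) A (ball xs ρ) c) {m : ℝ}
    (hA : ∀ v, m * ‖v‖ ≤ ‖A v‖) (hcm : c < m) {d : E n × E n} (hd : pnorm d < ρ) :
    pnorm (Psi q ((xs, xs) + d) - Psi q (xs, xs)) ≤
      (2 + (2 + 1 / (m - c)) * (‖A‖ + c)) * pnorm d := by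
  set p := (xs, xs) + d
  have hd₁ : p.1 - xs = d.1 := add_sub_cancel_left _ _
  have hd₂ : p.2 - xs = d.2 := add_sub_cancel_left _ _
  have hρ : 0 < ρ := (pnorm_nonneg d).trans_lt hd
  have hxs : xs ∈ ball xs ρ := mem_ball_self hρ
  have hp₁ : p.1 ∈ ball xs ρ := by
    rw [mem_ball_iff_norm, hd₁]; exact (norm_fst_le_pnorm d).trans_lt hd
  have hp₂ : p.2 ∈ ball xs ρ := by
    rw [mem_ball_iff_norm, hd₂]; exact (norm_snd_le_pnorm d).trans_lt hd
  have hr : ‖rr q p.1‖ ≤ (‖A‖ + c) * ‖d.1‖ := by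
    simpa [rr_eq_zero_of_fixed q hfix, hd₁] using hf.norm_image_sub_le hp₁ hxs
  have hfst := norm_Psi_fst_sub_le q xs (sub_pos.2 hcm)
    (hf.mul_norm_sub_le_norm_image_sub hA hp₁ hp₂)
  rw [hd₁] at hfst
  have hK : 0 ≤ 2 + 1 / (m - c) := by have := sub_pos.2 hcm; positivity
  rw [Psi_of_fixed q hfix]
  calc pnorm (Psi q p - (xs, xs))
      ≤ ‖(Psi q p).1 - xs‖ + ‖d.1‖ := by simpa [Psi, p] using pnorm_le_norm_add_norm _
    _ ≤ ‖d.1‖ + (2 + 1 / (m - c)) * ((‖A‖ + c) * ‖d.1‖) + ‖d.1‖ := by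
        gcongr; exact hfst.trans (by gcongr)
    _ = (2 + (2 + 1 / (m - c)) * (‖A‖ + c)) * ‖d.1‖ := by ring
    _ ≤ (2 + (2 + 1 / (m - c)) * (‖A‖ + c)) * pnorm d := by
        gcongr
        exact norm_fst_le_pnorm d

end AA1

theorem lipschitz_constant_le {N m c : ℝ} (hN : 0 ≤ N) (hm : 0 < m) (hc : 0 ≤ c)
    (hcm : (2 + 2 / m) * c ≤ 1) :
    2 + (2 + 1 / (m - c)) * (N + c) ≤ 3 + (4 + 4 / m) * N := by
  have h2c : 2 * c ≤ m := by
    have : 2 / m * c ≤ 1 := by nlinarith [div_nonneg zero_le_two hm.le]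
    rwa [div_mul_eq_mul_div, div_le_one hm] at this
  have hinv : 1 / (m - c) ≤ 2 / m := by
    rw [div_le_div_iff₀ (by linarith) hm]; linarith
  calc 2 + (2 + 1 / (m - c)) * (N + c) ≤ 2 + (2 + 2 / m) * (N + c) := by gcongr
    _ ≤ 3 + (2 + 2 / m) * N := by linarith
    _ ≤ 3 + (4 + 4 / m) * N := by gcongr <;> linarith [div_nonneg zero_le_two hm.le]

theorem stmt4_general {n : ℕ} (q : E n → E n) (xs : E n) (hq : ContDiffAt ℝ 1 q xs)
    (hfix : q xs = xs)
    (cr : ℝ) (hcr : 0 < cr)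
    (hlow : ∀ᶠ x in 𝓝 xs, ∀ v : E n, cr * ‖v‖ ≤ ‖fderiv ℝ (rr q) x v‖) :
    ∃ δ > 0, ∀ d : E n × E n, pnorm d < δ →
      pnorm (Psi q ((xs, xs) + d) - Psi q (xs, xs)) ≤
        (3 + (4 + 4 / cr) * ‖fderiv ℝ (rr q) xs‖) * pnorm d := by
  set A := fderiv ℝ (rr q) xs
  have hA : ∀ v, cr * ‖v‖ ≤ ‖A v‖ := hlow.self_of_nhds
  have hc₀ : 0 < cr / (2 * (cr + 1)) := by positivity
  obtain ⟨c, hc_eq⟩ : ∃ c : ℝ≥0, (c : ℝ) = cr / (2 * (cr + 1)) :=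
    ⟨⟨_, hc₀.le⟩, rfl⟩
  have hc : (2 + 2 / cr) * c = 1 := by rw [hc_eq]; field_simp
  have hcm : (c : ℝ) < cr := by rw [hc_eq, div_lt_iff₀ (by positivity)]; nlinarith
  have hstrict : HasStrictFDerivAt (rr q) A xs :=
    (contDiffAt_id.sub hq).hasStrictFDerivAt one_ne_zero
  obtain ⟨s, hs, happrox⟩ :=
    hstrict.approximates_deriv_on_nhds (Or.inr (NNReal.coe_pos.1 (hc_eq ▸ hc₀)))
  obtain ⟨ρ, hρ, hball⟩ := Metric.mem_nhds_iff.1 hs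
  refine ⟨ρ, hρ, fun d hd => ?_⟩
  refine (pnorm_Psi_sub_le q hfix (happrox.mono_set hball) hA hcm hd).trans ?_
  exact mul_le_mul_of_nonneg_right (lipschitz_constant_le (norm_nonneg _) hcr c.2 hc.le)
    (pnorm_nonneg d)

/-- local Lipschitz continuity of the AA(1) map `Ψ` at `z* = (x*,x*)` in the
nonlinear case, with constant `L = 3 + (4 + 4/c_r)‖r'(x*)‖`, where `c_r > 0` is a uniform
lower bound on the singular values of `r'(x)` near `x*`
(i.e. `c_r² ≤ λ_min(r'(x)ᵀ r'(x))`, equivalently `c_r‖v‖ ≤ ‖r'(x)v‖`). -/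
theorem stmt4 {n : ℕ} (q : E n → E n) (xs : E n) (hq : ContDiffAt ℝ 1 q xs)
    (hfix : q xs = xs)
    (hinv : Function.Bijective (fderiv ℝ (rr q) xs))
    (cr : ℝ) (hcr : 0 < cr)
    (hlow : ∀ᶠ x in 𝓝 xs, ∀ v : E n, cr * ‖v‖ ≤ ‖fderiv ℝ (rr q) x v‖) :
    ∃ δ > 0, ∀ d : E n × E n, pnorm d < δ →
      pnorm (Psi q ((xs, xs) + d) - Psi q (xs, xs)) ≤
        (3 + (4 + 4 / cr) * ‖fderiv ℝ (rr q) xs‖) * pnorm d :=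
  stmt4_general q xs hq hfix cr hcr hlow
end
end

section
/- Let d = (d₁, d₂) with d₁ ≠ d₂. Then the one-sided directional derivative of the AA(1) map Ψ at z* = (x*, x*) in direction d exists and equals ((1 + β̂(d)) M d₁ - β̂(d) M d₂, d₁), where M = q'(x*), A = I - M, and β̂(d) = -⟨A d₁, A(d₁-d₂)⟩ / ‖A(d₁-d₂)‖². -/
open scoped RealInnerProductSpace Topology
open Filter

noncomputable section

/-- one-sided directional derivative of the AA(1) map `Ψ` at `z* = (x*,x*)`
in a direction `d = (d₁, d₂)` with `d₁ ≠ d₂`: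
`𝔇Ψ(z*, d) = ((1 + β̂(d)) M d₁ - β̂(d) M d₂, d₁)` with
`β̂(d) = -⟪A d₁, A(d₁-d₂)⟫ / ‖A(d₁-d₂)‖²`. -/
theorem stmt5 {n : ℕ} (q : E n → E n) (xs : E n) (hfix : q xs = xs)
    (M : E n →L[ℝ] E n) (hM : HasFDerivAt q M xs)
    (A : E n →L[ℝ] E n) (hA : A = ContinuousLinearMap.id ℝ (E n) - M)
    (hAinv : Function.Bijective A) :
    ∀ d₁ d₂ : E n, d₁ ≠ d₂ →
      Tendsto (fun h : ℝ => h⁻¹ • (Psi q ((xs, xs) + h • (d₁, d₂)) - Psi q (xs, xs)))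
        (𝓝[>] 0)
        (𝓝 ((1 + (-⟪A d₁, A (d₁ - d₂)⟫ / ‖A (d₁ - d₂)‖ ^ 2)) • M d₁
              - (-⟪A d₁, A (d₁ - d₂)⟫ / ‖A (d₁ - d₂)‖ ^ 2) • M d₂, d₁)) := by
  intro d₁ d₂ hd
  set l := 𝓝[>] (0:ℝ) with hl
  set b : ℝ := -⟪A d₁, A (d₁ - d₂)⟫ / ‖A (d₁ - d₂)‖ ^ 2 with hb
  have hApt : ∀ v : E n, A v = v - M v := by
    intro v; rw [hA]; simp
  -- directional derivatives
  have hT : ∀ v : E n,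
      Tendsto (fun h : ℝ => h⁻¹ • (q (xs + h • v) - q xs)) l (𝓝 (M v)) :=
    fun v => (hM.hasLineDerivAt v).tendsto_slope_zero_right
  have hT1 := hT d₁
  have hT2 := hT d₂
  -- difference quotient of q between the two perturbed points
  have hTΔ : Tendsto (fun h : ℝ => h⁻¹ • (q (xs + h • d₁) - q (xs + h • d₂))) l
      (𝓝 (M d₁ - M d₂)) := by
    have := hT1.sub hT2
    refine this.congr fun h => ?_
    rw [← smul_sub]; congr 1; abel
  -- scaled residuals
  have hR1 : Tendsto (fun h : ℝ => d₁ - h⁻¹ • (q (xs + h • d₁) - q xs)) l (𝓝 (A d₁)) := by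
    rw [hApt d₁]; exact tendsto_const_nhds.sub hT1
  have hRΔ : Tendsto
      (fun h : ℝ => (d₁ - d₂) - h⁻¹ • (q (xs + h • d₁) - q (xs + h • d₂))) l
      (𝓝 (A (d₁ - d₂))) := by
    rw [hApt (d₁ - d₂)]
    have : M (d₁ - d₂) = M d₁ - M d₂ := by simp
    rw [this]
    exact tendsto_const_nhds.sub hTΔ
  have hAne : A (d₁ - d₂) ≠ 0 := by
    intro h0
    apply hd
    have h1 : d₁ - d₂ = 0 := by
      apply hAinv.injective
      simpa using h0
    exact sub_eq_zero.mp h1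
  have hpos : (0:ℝ) < ‖A (d₁ - d₂)‖ := norm_pos_iff.mpr hAne
  have hmem : ∀ᶠ h in l, (0:ℝ) < h := self_mem_nhdsWithin
  -- eventually the scaled residual difference is nonzero
  have hev : ∀ᶠ h in l,
      (0:ℝ) < ‖(d₁ - d₂) - h⁻¹ • (q (xs + h • d₁) - q (xs + h • d₂))‖ :=
    hRΔ.norm.eventually (eventually_gt_nhds hpos)
  -- limit of beta along the path
  have hbeta : Tendsto (fun h : ℝ => beta q ((xs, xs) + h • (d₁, d₂))) l (𝓝 b) := by
    have htarget : Tendsto (fun h : ℝ =>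
        -⟪d₁ - h⁻¹ • (q (xs + h • d₁) - q xs),
          (d₁ - d₂) - h⁻¹ • (q (xs + h • d₁) - q (xs + h • d₂))⟫ /
        ‖(d₁ - d₂) - h⁻¹ • (q (xs + h • d₁) - q (xs + h • d₂))‖ ^ 2) l (𝓝 b) := by
      apply Tendsto.div ((hR1.inner hRΔ).neg) (hRΔ.norm.pow 2)
      positivity
    refine htarget.congr' ?_
    filter_upwards [hmem, hev] with h hh hne
    set R1 : E n := d₁ - h⁻¹ • (q (xs + h • d₁) - q xs) with hR1d
    set RD : E n := (d₁ - d₂) - h⁻¹ • (q (xs + h • d₁) - q (xs + h • d₂)) with hRDd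
    have hhne : h ≠ 0 := ne_of_gt hh
    have hpt : (xs, xs) + h • (d₁, d₂) = (xs + h • d₁, xs + h • d₂) := rfl
    have hr1 : rr q (xs + h • d₁) = h • R1 := by
      rw [hR1d, rr, smul_sub, smul_smul, mul_inv_cancel₀ hhne, one_smul, hfix]
      abel
    have hr2 : rr q (xs + h • d₁) - rr q (xs + h • d₂) = h • RD := by
      rw [hRDd, rr, rr, smul_sub, smul_smul, mul_inv_cancel₀ hhne, one_smul, smul_sub]
      abel
    have hRDne : RD ≠ 0 := by
      intro h0; rw [h0] at hne; simp at hne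
    have hcond : rr q (xs + h • d₁) ≠ rr q (xs + h • d₂) := by
      intro h0
      apply hRDne
      have : h • RD = 0 := by rw [← hr2, h0]; simp
      simpa [hhne] using this
    rw [beta, hpt]
    simp only
    rw [if_neg hcond, hr2, hr1]
    rw [real_inner_smul_left, real_inner_smul_right, norm_smul]
    rw [mul_pow, Real.norm_eq_abs, sq_abs]
    field_simp
  -- first component limit
  have hval : (1 + b) • M d₁ - b • M d₂ = M d₁ + b • (M d₁ - M d₂) := by module
  have hF1 : Tendsto (fun h : ℝ =>
      h⁻¹ • (q (xs + h • d₁) - q xs) +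
      beta q ((xs, xs) + h • (d₁, d₂)) • (h⁻¹ • (q (xs + h • d₁) - q (xs + h • d₂)))) l
      (𝓝 ((1 + b) • M d₁ - b • M d₂)) := by
    rw [hval]
    exact hT1.add (hbeta.smul hTΔ)
  have hpair := hF1.prodMk_nhds (tendsto_const_nhds : Tendsto (fun _ : ℝ => d₁) l (𝓝 d₁))
  refine hpair.congr' ?_
  have hPsi0 : Psi q (xs, xs) = (xs, xs) := by
    simp [Psi, beta, hfix]
  filter_upwards [hmem] with h hh
  have hhne : h ≠ 0 := ne_of_gt hh
  rw [hPsi0]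
  have hpt : (xs, xs) + h • (d₁, d₂) = (xs + h • d₁, xs + h • d₂) := rfl
  rw [hpt]
  set s : ℝ := beta q (xs + h • d₁, xs + h • d₂) with hs
  have hPsi : Psi q (xs + h • d₁, xs + h • d₂)
      = (q (xs + h • d₁) + s • (q (xs + h • d₁) - q (xs + h • d₂)), xs + h • d₁) := rfl
  rw [hPsi]
  apply Prod.ext
  · show h⁻¹ • (q (xs + h • d₁) - q xs) +
      s • (h⁻¹ • (q (xs + h • d₁) - q (xs + h • d₂)))
      = h⁻¹ • (q (xs + h • d₁) + s • (q (xs + h • d₁) - q (xs + h • d₂)) - xs)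
    rw [hfix]
    module
  · show d₁ = h⁻¹ • (xs + h • d₁ - xs)
    rw [add_sub_cancel_left, smul_smul, inv_mul_cancel₀ hhne, one_smul]
end
end

section
/- In the scalar case n = 1 with q'(x*) ≠ 1, the AA(1) map Ψ : ℝ² → ℝ² is not (Fréchet) differentiable at z* = (x*, x*): its directional derivative at z* equals (0, d₁) whenever d₁ ≠ d₂ but equals ((1-a) d₁, d₁) with a = 1 - q'(x*) when d₁ = d₂, and these are inconsistent with a single linear map unless q'(x*) = 0. -/
open scoped Topology
open Filter

noncomputable section

/-- Scalar residual `r(x) = x - q(x)`. -/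
def rs (q : ℝ → ℝ) (x : ℝ) : ℝ := x - q x

open Classical in
/-- Scalar AA(1) coefficient. -/
def betas (q : ℝ → ℝ) (p : ℝ × ℝ) : ℝ :=
  if rs q p.1 = rs q p.2 then 0
  else -(rs q p.1 * (rs q p.1 - rs q p.2)) / (rs q p.1 - rs q p.2) ^ 2

/-- Scalar AA(1) map `Ψ`. -/
def Psis (q : ℝ → ℝ) (p : ℝ × ℝ) : ℝ × ℝ :=
  (q p.1 + betas q p * (q p.1 - q p.2), p.1)

/-!
On the diagonal `β = 0`, so `Ψ(y, y) = (q y, y)` and the derivative along `(d, d)`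
is `(q'(x*) d, d)`. Off the diagonal, since `q = id - r`, the first component of `Ψ(x, y)` is the
secant step `x - r(x) (x - y) / (r(x) - r(y))` for a root of `r`. Along `z* + t (d₁, d₂)` with
`d₁ ≠ d₂` the secant through two points approaching the simple root `x*` of `r` from the directions
`d₁` and `d₂` hits `x*` to first order, so the derivative along `(d₁, d₂)` is `(0, d₁)`.
A linear map cannot send `(1,0) ↦ (0,1)`, `(0,1) ↦ (0,0)` and `(1,1) ↦ (q'(x*), 1)` unless
`q'(x*) = 0`.
-/

namespace Psis

variable {q : ℝ → ℝ} {x m : ℝ}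

lemma diag (y : ℝ) : Psis q (y, y) = (q y, y) := by
  simp [Psis, betas]

lemma fst_of_rs_ne {y z : ℝ} (h : rs q y ≠ rs q z) :
    (Psis q (y, z)).1 = y - rs q y * (y - z) / (rs q y - rs q z) := by
  have hsub : rs q y - rs q z ≠ 0 := sub_ne_zero.2 h
  simp only [Psis, betas, if_neg h]
  simp only [rs] at hsub ⊢
  field_simp
  ring

lemma hasLineDerivAt_diag (hm : HasDerivAt q m x) (d : ℝ) :
    HasLineDerivAt ℝ (Psis q) (m * d, d) (x, x) (d, d) := by
  have hline : HasDerivAt (fun t : ℝ => x + t * d) d 0 := by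
    simpa using ((hasDerivAt_id (0 : ℝ)).mul_const d).const_add x
  have hq : HasDerivAt (fun t : ℝ => q (x + t * d)) (m * d) 0 :=
    (by simpa using hm : HasDerivAt q m (x + 0 * d)).comp 0 hline
  have hpath : (fun t : ℝ => Psis q ((x, x) + t • (d, d))) = fun t => (q (x + t * d), x + t * d) := by
    funext t
    simp [diag]
  unfold HasLineDerivAt
  rw [hpath]
  exact hq.prodMk hline

lemma tendsto_slope_rs (hfix : q x = x) (hm : HasDerivAt q m x) (d : ℝ) :
    Tendsto (fun t : ℝ => t⁻¹ * rs q (x + t * d)) (𝓝[≠] 0) (𝓝 ((1 - m) * d)) := by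
  have hr : HasDerivAt (rs q) (1 - m) x := (hasDerivAt_id x).sub hm
  have := (hr.hasFDerivAt.hasLineDerivAt d).tendsto_slope_zero
  simpa [rs, hfix, mul_comm d] using this

lemma hasLineDerivAt_fst_of_ne (hfix : q x = x) (hm : HasDerivAt q m x) (hm1 : m ≠ 1)
    {d₁ d₂ : ℝ} (hd : d₁ ≠ d₂) :
    HasLineDerivAt ℝ (fun p => (Psis q p).1) 0 (x, x) (d₁, d₂) := by
  rw [hasLineDerivAt_iff_tendsto_slope_zero]
  set u := fun t : ℝ => t⁻¹ * rs q (x + t * d₁)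
  set v := fun t : ℝ => t⁻¹ * rs q (x + t * d₂)
  have hu : Tendsto u (𝓝[≠] 0) (𝓝 ((1 - m) * d₁)) := tendsto_slope_rs hfix hm d₁
  have hv : Tendsto v (𝓝[≠] 0) (𝓝 ((1 - m) * d₂)) := tendsto_slope_rs hfix hm d₂
  have ha : 1 - m ≠ 0 := sub_ne_zero.2 (Ne.symm hm1)
  have hgap : (1 - m) * d₁ - (1 - m) * d₂ ≠ 0 := by
    rw [← mul_sub]; exact mul_ne_zero ha (sub_ne_zero.2 hd)
  have hlim : Tendsto (fun t => d₁ - u t * (d₁ - d₂) / (u t - v t)) (𝓝[≠] 0) (𝓝 0) := by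
    have hval : d₁ - (1 - m) * d₁ * (d₁ - d₂) / ((1 - m) * d₁ - (1 - m) * d₂) = 0 := by
      rw [← mul_sub, mul_assoc, mul_div_mul_left _ _ ha, mul_div_cancel_right₀ _ (sub_ne_zero.2 hd),
        sub_self]
    have := (tendsto_const_nhds (x := d₁)).sub ((hu.mul_const (d₁ - d₂)).div (hu.sub hv) hgap)
    rwa [hval] at this
  refine hlim.congr' ?_
  filter_upwards [(hu.sub hv).eventually_ne hgap, self_mem_nhdsWithin] with t huv ht
  have ht : t ≠ 0 := ht
  have hrs : rs q (x + t * d₁) ≠ rs q (x + t * d₂) := fun h => huv (by simp [u, v, h])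
  simp only [Prod.smul_mk, Prod.mk_add_mk, smul_eq_mul, diag, hfix]
  rw [fst_of_rs_ne hrs]
  have hsub : rs q (x + t * d₁) - rs q (x + t * d₂) ≠ 0 := sub_ne_zero.2 hrs
  simp only [u, v]
  field_simp
  ring

lemma hasLineDerivAt_of_ne (hfix : q x = x) (hm : HasDerivAt q m x) (hm1 : m ≠ 1)
    {d₁ d₂ : ℝ} (hd : d₁ ≠ d₂) :
    HasLineDerivAt ℝ (Psis q) (0, d₁) (x, x) (d₁, d₂) :=
  (hasLineDerivAt_fst_of_ne hfix hm hm1 hd).prodMk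
    ((hasFDerivAt_fst (𝕜 := ℝ) (p := (x, x))).hasLineDerivAt (d₁, d₂))

lemma not_differentiableAt (hfix : q x = x) (hm : HasDerivAt q m x) (hm0 : m ≠ 0)
    (hm1 : m ≠ 1) : ¬ DifferentiableAt ℝ (Psis q) (x, x) := by
  intro hdiff
  set L := fderiv ℝ (Psis q) (x, x)
  have hL (v : ℝ × ℝ) : HasLineDerivAt ℝ (Psis q) (L v) (x, x) v :=
    hdiff.hasFDerivAt.hasLineDerivAt v
  have e₁ : L (1, 0) = (0, 1) := (hL _).unique (hasLineDerivAt_of_ne hfix hm hm1 one_ne_zero)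
  have e₂ : L (0, 1) = (0, 0) := (hL _).unique (hasLineDerivAt_of_ne hfix hm hm1 zero_ne_one)
  have e₃ : L (1, 1) = (m * 1, 1) := (hL _).unique (hasLineDerivAt_diag hm 1)
  have hadd : L (1, 1) = L (1, 0) + L (0, 1) := by rw [← map_add]; norm_num
  rw [e₁, e₂, e₃] at hadd
  exact hm0 (by simpa using congrArg Prod.fst hadd)

end Psis

/-- in the scalar case with `q'(x*) ∉ {0,1}`, the AA(1) map `Ψ : ℝ² → ℝ²` is
not Fréchet differentiable at `z* = (x*,x*)`: its directional derivative equals `(0, d₁)`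
when `d₁ ≠ d₂`, but equals `((1-a) d₁, d₁)`, `a = 1 - q'(x*)`, when `d₁ = d₂`. -/
theorem stmt7 (q : ℝ → ℝ) (xs m a : ℝ) (hfix : q xs = xs) (hm : HasDerivAt q m xs)
    (hm0 : m ≠ 0) (hm1 : m ≠ 1) (ha : a = 1 - m) :
    (∀ d₁ d₂ : ℝ, d₁ ≠ d₂ →
      Tendsto (fun h : ℝ => h⁻¹ • (Psis q ((xs, xs) + h • (d₁, d₂)) - Psis q (xs, xs)))
        (𝓝[>] 0) (𝓝 (0, d₁))) ∧
    (∀ d₁ : ℝ,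
      Tendsto (fun h : ℝ => h⁻¹ • (Psis q ((xs, xs) + h • (d₁, d₁)) - Psis q (xs, xs)))
        (𝓝[>] 0) (𝓝 ((1 - a) * d₁, d₁))) ∧
    ¬ DifferentiableAt ℝ (Psis q) (xs, xs) := by
  subst ha
  refine ⟨fun d₁ d₂ hd => (Psis.hasLineDerivAt_of_ne hfix hm hm1 hd).tendsto_slope_zero_right,
    fun d => ?_, Psis.not_differentiableAt hfix hm hm0 hm1⟩
  rw [sub_sub_cancel]
  exact (Psis.hasLineDerivAt_diag hm d).tendsto_slope_zero_right
end
end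

section
/- Scalar case: if x_k → x* superlinearly in the sense that (x_k - x*)/(x_{k-1} - x*) → 0, x_k ≠ x* for all k, r is differentiable at x* with r(x*) = 0 and r'(x*) ≠ 0, and r_k ≠ r_{k-1} for all large k, then the AA(1) coefficients β_k = -r_k/(r_k - r_{k-1}) satisfy β_k → 0. -/
open scoped Topology
open Filter

/-- scalar case. If `x_k → x*` superlinearly (`(x_k - x*)/(x_{k-1} - x*) → 0`),
`x_k ≠ x*`, `r` is differentiable at `x*` with `r(x*) = 0` and `r'(x*) ≠ 0`, and
`r_k ≠ r_{k-1}` for all large `k`, then `β_k = -r_k/(r_k - r_{k-1}) → 0`. -/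
theorem stmt9 (q : ℝ → ℝ) (xs : ℝ) (x : ℕ → ℝ)
    (r : ℝ → ℝ) (hr : r = fun t => t - q t)
    (hconv : Tendsto x atTop (𝓝 xs))
    (hsup : Tendsto (fun k => (x (k + 1) - xs) / (x k - xs)) atTop (𝓝 0))
    (hne : ∀ k, x k ≠ xs)
    (r' : ℝ) (hd : HasDerivAt r r' xs) (hr0 : r xs = 0) (hr' : r' ≠ 0)
    (hrk : ∀ᶠ k in atTop, r (x (k + 1)) ≠ r (x k)) :
    Tendsto (fun k => -(r (x (k + 1))) / (r (x (k + 1)) - r (x k))) atTop (𝓝 0) := by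
  -- slope tends to r'
  have hslope : Tendsto (slope r xs) (𝓝[≠] xs) (𝓝 r') :=
    hasDerivAt_iff_tendsto_slope.mp hd
  have hx : Tendsto x atTop (𝓝[≠] xs) :=
    tendsto_nhdsWithin_iff.mpr ⟨hconv, Eventually.of_forall fun k => hne k⟩
  have hg : Tendsto (fun k => r (x k) / (x k - xs)) atTop (𝓝 r') := by
    have := hslope.comp hx
    refine this.congr fun k => ?_
    simp [slope, hr0, inv_mul_eq_div]
  have hg1 : Tendsto (fun k => r (x (k + 1)) / (x (k + 1) - xs)) atTop (𝓝 r') :=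
    hg.comp (tendsto_add_atTop_nat 1)
  -- ρ k = r(x(k+1))/r(x k) → 0
  have hρ : Tendsto (fun k => r (x (k + 1)) / r (x k)) atTop (𝓝 0) := by
    have h0 : Tendsto (fun k =>
        (r (x (k + 1)) / (x (k + 1) - xs)) / (r (x k) / (x k - xs)) *
        ((x (k + 1) - xs) / (x k - xs))) atTop (𝓝 ((r' / r') * 0)) :=
      (hg1.div hg hr').mul hsup
    rw [div_self hr', one_mul] at h0
    -- eventually r (x k) ≠ 0
    have hrne : ∀ᶠ k in atTop, r (x k) ≠ 0 := by
      have := hg.eventually_ne hr'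
      filter_upwards [this] with k hk h
      exact hk (by simp [h])
    refine h0.congr' ?_
    filter_upwards [hrne] with k hk
    have hx1 : x (k + 1) - xs ≠ 0 := sub_ne_zero.mpr (hne _)
    have hx0 : x k - xs ≠ 0 := sub_ne_zero.mpr (hne k)
    field_simp
  have hrne : ∀ᶠ k in atTop, r (x k) ≠ 0 := by
    have := hg.eventually_ne hr'
    filter_upwards [this] with k hk h
    exact hk (by simp [h])
  -- β k = -ρ/(ρ - 1)
  have hlim : Tendsto (fun k => -(r (x (k + 1)) / r (x k)) /
      (r (x (k + 1)) / r (x k) - 1)) atTop (𝓝 (-(0:ℝ) / (0 - 1))) := by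
    exact (hρ.neg).div (hρ.sub_const 1) (by norm_num)
  have : (-(0:ℝ) / (0 - 1)) = 0 := by norm_num
  rw [this] at hlim
  refine hlim.congr' ?_
  filter_upwards [hrne, hrk] with k hk hne'
  have hsub : r (x (k + 1)) - r (x k) ≠ 0 := sub_ne_zero.mpr hne'
  field_simp
end

section
/- For m ≥ 1, the AA(m) coefficient map β(z) = -R(z)† r(z_{m+1}) is not continuous at the fixed point z* = (x*, …, x*): along perturbations d(ε) = (ε d₁, ε d₂, ε d₁, …, ε d₁) one has β(z* + d(ε)) = (Δ(ε), 0, …, 0) with lim_{ε→0} Δ(ε) = 0 when d₁ = d₂ or d₁ = 0, but lim_{ε→0} Δ(ε) = -1 when d₂ = 0 and d₁ ≠ 0; hence the limit depends on the direction. -/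
open scoped Topology
open Filter Matrix

noncomputable section

/-- The four Penrose conditions: `P` is the Moore–Penrose pseudo-inverse of `B`. -/
def IsMoorePenrose {k l : ℕ} (B : Matrix (Fin k) (Fin l) ℝ)
    (P : Matrix (Fin l) (Fin k) ℝ) : Prop :=
  B * P * B = B ∧ P * B * P = P ∧ (B * P)ᵀ = B * P ∧ (P * B)ᵀ = P * B

open Classical in
/-- The Moore–Penrose pseudo-inverse `B†` (the unique matrix satisfying the Penrose
conditions; it always exists for real matrices). -/
def pinv {k l : ℕ} (B : Matrix (Fin k) (Fin l) ℝ) : Matrix (Fin l) (Fin k) ℝ :=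
  if h : ∃ P, IsMoorePenrose B P then h.choose else 0

/-- Spectral (operator) norm of a matrix, as the operator norm of the induced map on
Euclidean spaces. -/
def specNorm {k l : ℕ} (B : Matrix (Fin k) (Fin l) ℝ) : ℝ :=
  ‖LinearMap.toContinuousLinearMap (Matrix.toEuclideanLin B)‖

/-- Difference matrix `D(z) = [z_{m+1}-z_m, …, z_{m+1}-z₁]`; blocks are indexed so that
`z j` is the paper's `z_{j+1}`, i.e. `z (Fin.last m)` is `z_{m+1}`, and column `j`
(`j = 0, …, m-1`) is `z_{m+1} - z_{m-j}`. -/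
def Dmat {n m : ℕ} (z : Fin (m + 1) → Fin n → ℝ) : Matrix (Fin n) (Fin m) ℝ :=
  Matrix.of fun i j => (z (Fin.last m) - z (Fin.rev j.succ)) i

/-- Residual difference matrix `R(z) = [r(z_{m+1})-r(z_m), …, r(z_{m+1})-r(z₁)]`. -/
def Rmat {n m : ℕ} (r : (Fin n → ℝ) → Fin n → ℝ) (z : Fin (m + 1) → Fin n → ℝ) :
    Matrix (Fin n) (Fin m) ℝ :=
  Matrix.of fun i j => (r (z (Fin.last m)) - r (z (Fin.rev j.succ))) i

/-- Iterate difference matrix `Q(z) = [q(z_{m+1})-q(z_m), …, q(z_{m+1})-q(z₁)]`. -/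
def Qmat {n m : ℕ} (q : (Fin n → ℝ) → Fin n → ℝ) (z : Fin (m + 1) → Fin n → ℝ) :
    Matrix (Fin n) (Fin m) ℝ :=
  Matrix.of fun i j => (q (z (Fin.last m)) - q (z (Fin.rev j.succ))) i

/-- AA(m) coefficient vector `β(z) = -R(z)† r(z_{m+1})`. -/
def betaF {n m : ℕ} (r : (Fin n → ℝ) → Fin n → ℝ) (z : Fin (m + 1) → Fin n → ℝ) :
    Fin m → ℝ :=
  -(pinv (Rmat r z)).mulVec (r (z (Fin.last m)))

/-- AA(m) iteration map `Ψ(z) = (q(z_{m+1}) + Q(z)β(z), z_{m+1}, z_m, …, z₂)`. -/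
def PsiM {n m : ℕ} (q : (Fin n → ℝ) → Fin n → ℝ) (z : Fin (m + 1) → Fin n → ℝ) :
    Fin (m + 1) → Fin n → ℝ :=
  fun i => Fin.lastCases
    (q (z (Fin.last m)) + (Qmat q z).mulVec (betaF (fun x => x - q x) z))
    (fun j : Fin m => z j.succ) i

/-- Euclidean norm on `ℝ^{n(m+1)}` viewed as block vectors. -/
def enormV {n m : ℕ} (v : Fin (m + 1) → Fin n → ℝ) : ℝ :=
  Real.sqrt (∑ i, ∑ j, v i j ^ 2)

/-! Along the perturbation only the column of `R(z)` coming from `z_m` is nonzero, so `R(z) = c e₁ᵀ`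
with `c = r(x* + εd₁) - r(x* + εd₂)`, and the pseudo-inverse of a rank-one matrix `u vᵀ` is
`v uᵀ / (‖u‖² ‖v‖²)`. Hence `β = -(c ⬝ r(x* + εd₁) / ‖c‖²) e₁`. This vanishes identically when
`d₁ = d₂` (then `c = 0`, and `0 / 0 = 0`) or `d₁ = 0` (then `r(x*) = 0`), while for `d₂ = 0` it is
`-1` as soon as `r(x* + εd₁) ≠ 0`, which holds for small `ε ≠ 0` because `r'(x*) d₁ ≠ 0`.
Continuity at `z*` would force both limits to equal `β(z*)`. -/

theorem IsMoorePenrose.unique {k l : ℕ} {B : Matrix (Fin k) (Fin l) ℝ}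
    {P₁ P₂ : Matrix (Fin l) (Fin k) ℝ} (h₁ : IsMoorePenrose B P₁) (h₂ : IsMoorePenrose B P₂) :
    P₁ = P₂ := by
  obtain ⟨hBPB₁, hPBP₁, hBP₁, hPB₁⟩ := h₁
  obtain ⟨hBPB₂, hPBP₂, hBP₂, hPB₂⟩ := h₂
  have hBP : B * P₁ = B * P₂ :=
    calc B * P₁ = (B * P₂) * (B * P₁) := by rw [← Matrix.mul_assoc, hBPB₂]
    _ = ((B * P₁) * (B * P₂))ᵀ := by rw [transpose_mul, hBP₁, hBP₂]
    _ = B * P₂ := by rw [← Matrix.mul_assoc, hBPB₁, hBP₂]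
  have hPB : P₁ * B = P₂ * B :=
    calc P₁ * B = (P₁ * B) * (P₂ * B) := by rw [Matrix.mul_assoc, ← Matrix.mul_assoc B, hBPB₂]
    _ = ((P₂ * B) * (P₁ * B))ᵀ := by rw [transpose_mul, hPB₁, hPB₂]
    _ = P₂ * B := by rw [Matrix.mul_assoc, ← Matrix.mul_assoc B, hBPB₁, hPB₂]
  calc P₁ = P₁ * (B * P₁) := by rw [← Matrix.mul_assoc, hPBP₁]
  _ = P₂ * B * P₂ := by rw [hBP, ← Matrix.mul_assoc, hPB]
  _ = P₂ := hPBP₂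

theorem pinv_eq_of_isMoorePenrose {k l : ℕ} {B : Matrix (Fin k) (Fin l) ℝ}
    {P : Matrix (Fin l) (Fin k) ℝ} (h : IsMoorePenrose B P) : pinv B = P := by
  have hex : ∃ P', IsMoorePenrose B P' := ⟨P, h⟩
  rw [pinv, dif_pos hex]
  exact hex.choose_spec.unique h

theorem isMoorePenrose_vecMulVec {k l : ℕ} (u : Fin k → ℝ) (v : Fin l → ℝ) :
    IsMoorePenrose (vecMulVec u v) ((u ⬝ᵥ u * (v ⬝ᵥ v))⁻¹ • vecMulVec v u) := by
  by_cases hs : u ⬝ᵥ u * (v ⬝ᵥ v) = 0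
  · rcases mul_eq_zero.1 hs with h | h <;> obtain rfl := dotProduct_self_eq_zero.1 h <;>
      simp [IsMoorePenrose, ← Matrix.ext_iff, vecMulVec_apply]
  have hc : (u ⬝ᵥ u * (v ⬝ᵥ v))⁻¹ * (u ⬝ᵥ u) * (v ⬝ᵥ v) = 1 := by
    rw [mul_assoc, inv_mul_cancel₀ hs]
  refine ⟨?_, ?_, ?_, ?_⟩ <;>
    simp only [Matrix.smul_mul, Matrix.mul_smul, vecMulVec_mul_vecMulVec, vecMulVec_smul,
      smul_smul, transpose_smul, transpose_vecMulVec]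
  · rw [mul_right_comm, hc, one_smul]
  · rw [hc, mul_one]

theorem pinv_vecMulVec_mulVec {k l : ℕ} (u a : Fin k → ℝ) (v : Fin l → ℝ) :
    pinv (vecMulVec u v) *ᵥ a = ((u ⬝ᵥ a) / (u ⬝ᵥ u * (v ⬝ᵥ v))) • v := by
  rw [pinv_eq_of_isMoorePenrose (isMoorePenrose_vecMulVec u v), smul_mulVec,
    vecMulVec_mulVec, op_smul_eq_smul, smul_smul, div_eq_inv_mul]

theorem Rmat_eq_vecMulVec_single {n m : ℕ} (hm : 0 < m) (r : (Fin n → ℝ) → Fin n → ℝ)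
    (w w' : Fin n → ℝ) :
    Rmat r (fun i : Fin (m + 1) => if (i : ℕ) = m - 1 then w' else w) =
      vecMulVec (r w - r w') (Pi.single ⟨0, hm⟩ 1) := by
  ext i j
  rcases eq_or_ne j ⟨0, hm⟩ with rfl | hj
  · simp [Rmat, vecMulVec_apply, show m ≠ m - 1 by omega]
  · have hrev : m - ((j : ℕ) + 1) ≠ m - 1 := by
      rw [Ne, Fin.ext_iff] at hj; have := j.isLt; dsimp at hj; omega
    simp [Rmat, vecMulVec_apply, hrev, hj, show m ≠ m - 1 by omega]

theorem betaF_eq_smul_single {n m : ℕ} (hm : 0 < m) (r : (Fin n → ℝ) → Fin n → ℝ)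
    (w w' : Fin n → ℝ) :
    betaF r (fun i : Fin (m + 1) => if (i : ℕ) = m - 1 then w' else w) =
      (-((r w - r w') ⬝ᵥ r w / ((r w - r w') ⬝ᵥ (r w - r w')))) • Pi.single ⟨0, hm⟩ 1 := by
  rw [betaF, Rmat_eq_vecMulVec_single hm, pinv_vecMulVec_mulVec, neg_smul]
  simp [show m ≠ m - 1 by omega]

/-- The paper's `z* + d(ε)`: block `m - 1` (the paper's `z_m`) is moved by `εd₂`, every other
block by `εd₁`. -/
def perturb {n m : ℕ} (xs d₁ d₂ : Fin n → ℝ) (ε : ℝ) : Fin (m + 1) → Fin n → ℝ :=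
  fun i => xs + ε • if (i : ℕ) = m - 1 then d₂ else d₁

theorem perturb_eq_ite {n m : ℕ} (xs d₁ d₂ : Fin n → ℝ) (ε : ℝ) :
    perturb (m := m) xs d₁ d₂ ε =
      fun i : Fin (m + 1) => if (i : ℕ) = m - 1 then xs + ε • d₂ else xs + ε • d₁ := by
  funext i; unfold perturb; split_ifs <;> rfl

theorem betaF_perturb_apply_of_ne {n m : ℕ} (hm : 0 < m) (r : (Fin n → ℝ) → Fin n → ℝ)
    (xs d₁ d₂ : Fin n → ℝ) (ε : ℝ) {j : Fin m} (hj : j ≠ ⟨0, hm⟩) :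
    betaF r (perturb xs d₁ d₂ ε) j = 0 := by
  simp [perturb_eq_ite, betaF_eq_smul_single hm, hj]

theorem betaF_perturb_apply_zero {n m : ℕ} (hm : 0 < m) (r : (Fin n → ℝ) → Fin n → ℝ)
    (xs d₁ d₂ : Fin n → ℝ) (ε : ℝ) :
    betaF r (perturb xs d₁ d₂ ε) ⟨0, hm⟩ =
      -((r (xs + ε • d₁) - r (xs + ε • d₂)) ⬝ᵥ r (xs + ε • d₁) /
        ((r (xs + ε • d₁) - r (xs + ε • d₂)) ⬝ᵥ (r (xs + ε • d₁) - r (xs + ε • d₂)))) := by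
  simp [perturb_eq_ite, betaF_eq_smul_single hm]

theorem tendsto_perturb {n m : ℕ} (xs d₁ d₂ : Fin n → ℝ) :
    Tendsto (perturb (m := m) xs d₁ d₂) (𝓝 0) (𝓝 fun _ => xs) := by
  have hc : Continuous (perturb (m := m) xs d₁ d₂) := by unfold perturb; fun_prop
  convert hc.tendsto 0 using 2
  funext i
  simp [perturb]

theorem HasFDerivAt.eventually_apply_add_smul_ne {𝕜 E F : Type*} [NontriviallyNormedField 𝕜]
    [NormedAddCommGroup E] [NormedSpace 𝕜 E] [NormedAddCommGroup F] [NormedSpace 𝕜 F]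
    {f : E → F} {f' : E →L[𝕜] F} {x d : E} (hf : HasFDerivAt f f' x) (hd : f' d ≠ 0) (c : F) :
    ∀ᶠ ε in 𝓝[≠] (0 : 𝕜), f (x + ε • d) ≠ c := by
  have hline : HasDerivAt (fun ε : 𝕜 => x + ε • d) d 0 := by
    simpa using ((hasDerivAt_id (0 : 𝕜)).smul_const d).const_add x
  have hf₀ : HasFDerivAt f f' (x + (0 : 𝕜) • d) := by simpa using hf
  exact (hf₀.comp_hasDerivAt 0 hline).eventually_ne hd

theorem not_continuousAt_of_tendsto_ne {α X Y : Type*} [TopologicalSpace X]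
    [TopologicalSpace Y] [T2Space Y] {l : Filter α} [l.NeBot] {f : X → Y} {g₁ g₂ : α → X}
    {x : X} {a b : Y} (hg₁ : Tendsto g₁ l (𝓝 x)) (hg₂ : Tendsto g₂ l (𝓝 x))
    (ha : Tendsto (f ∘ g₁) l (𝓝 a)) (hb : Tendsto (f ∘ g₂) l (𝓝 b)) (hab : a ≠ b) :
    ¬ ContinuousAt f x := fun hf =>
  hab ((tendsto_nhds_unique ha (hf.tendsto.comp hg₁)).trans
    (tendsto_nhds_unique hb (hf.tendsto.comp hg₂)).symm)

/-- for `m ≥ 1`, `β` is not continuous at `z* = (x*,…,x*)`. Along the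
perturbations `d(ε) = (εd₁, εd₂, εd₁, …, εd₁)` (block `z_m` gets `εd₂`, all others `εd₁`),
`β(z* + d(ε))` has all components zero except the first one `Δ(ε)`, with
`Δ(ε) → 0` when `d₁ = d₂` or `d₁ = 0`, but `Δ(ε) → -1` when `d₂ = 0` and `d₁ ≠ 0`. -/
theorem stmt12 {n m : ℕ} (hn : 0 < n) (hm : 0 < m)
    (q : (Fin n → ℝ) → Fin n → ℝ) (hq : ContDiff ℝ 1 q)
    (xs : Fin n → ℝ) (hfix : q xs = xs)
    (hA : Function.Bijective (fderiv ℝ (fun x => x - q x) xs))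
    (zpert : (Fin n → ℝ) → (Fin n → ℝ) → ℝ → Fin (m + 1) → Fin n → ℝ)
    (hz : zpert = fun d₁ d₂ ε i => xs + ε • (if i.val = m - 1 then d₂ else d₁)) :
    (∀ (d₁ d₂ : Fin n → ℝ) (ε : ℝ) (j : Fin m), j ≠ ⟨0, hm⟩ →
      betaF (fun x => x - q x) (zpert d₁ d₂ ε) j = 0) ∧
    (∀ d₁ d₂ : Fin n → ℝ, d₁ = d₂ ∨ d₁ = 0 →
      Tendsto (fun ε : ℝ => betaF (fun x => x - q x) (zpert d₁ d₂ ε) ⟨0, hm⟩)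
        (𝓝[≠] 0) (𝓝 0)) ∧
    (∀ d₁ : Fin n → ℝ, d₁ ≠ 0 →
      Tendsto (fun ε : ℝ => betaF (fun x => x - q x) (zpert d₁ 0 ε) ⟨0, hm⟩)
        (𝓝[≠] 0) (𝓝 (-1))) ∧
    ¬ ContinuousAt (betaF (m := m) (fun x => x - q x)) (fun _ : Fin (m + 1) => xs) := by
  obtain rfl : zpert = perturb xs := hz
  set r : (Fin n → ℝ) → Fin n → ℝ := fun x => x - q x
  have hr0 : r xs = 0 := sub_eq_zero.2 hfix.symm
  have hr : HasFDerivAt r (fderiv ℝ r xs) xs :=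
    (differentiableAt_id.sub (hq.differentiable one_ne_zero xs)).hasFDerivAt
  have hlim_zero : ∀ d₁ d₂ : Fin n → ℝ, d₁ = d₂ ∨ d₁ = 0 →
      Tendsto (fun ε : ℝ => betaF r (perturb xs d₁ d₂ ε) ⟨0, hm⟩) (𝓝[≠] 0) (𝓝 0) := by
    rintro d₁ d₂ (rfl | rfl) <;> simp [betaF_perturb_apply_zero, hr0]
  have hlim_neg_one : ∀ d₁ : Fin n → ℝ, d₁ ≠ 0 →
      Tendsto (fun ε : ℝ => betaF r (perturb xs d₁ 0 ε) ⟨0, hm⟩) (𝓝[≠] 0) (𝓝 (-1)) := by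
    intro d₁ hd₁
    have hne : ∀ᶠ ε in 𝓝[≠] (0 : ℝ), r (xs + ε • d₁) ≠ 0 :=
      hr.eventually_apply_add_smul_ne (by simpa using hA.injective.ne hd₁) 0
    refine (tendsto_congr' (hne.mono fun ε hε => ?_)).1 tendsto_const_nhds
    simp [betaF_perturb_apply_zero, hr0, hε]
  refine ⟨fun d₁ d₂ ε j hj => betaF_perturb_apply_of_ne hm r xs d₁ d₂ ε hj, hlim_zero,
    hlim_neg_one, fun hcont => ?_⟩
  have : NeZero n := ⟨hn.ne'⟩
  obtain ⟨d, hd⟩ := exists_ne (0 : Fin n → ℝ)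
  exact not_continuousAt_of_tendsto_ne (f := fun z => betaF r z ⟨0, hm⟩)
    ((tendsto_perturb xs d d).mono_left nhdsWithin_le_nhds)
    ((tendsto_perturb xs d 0).mono_left nhdsWithin_le_nhds) (hlim_zero d d (.inl rfl))
    (hlim_neg_one d hd) (by norm_num) ((continuous_apply _).continuousAt.comp hcont)
end
end

section
/- Linear case: the AA(m) iteration map Ψ is Lipschitz at any z with first block z_{m+1} = x* = A⁻¹b: for all perturbations d ∈ ℝ^{n(m+1)}, ‖Ψ(z + d) - Ψ(z)‖ ≤ L‖d‖ with L = (1 + ‖A⁻¹‖·‖A‖)·‖I - A‖ + 1. -/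
open scoped Topology
open Filter Matrix

noncomputable section

/-! At a point with `z_{m+1} = x*` the residual vanishes, so `β(z) = 0` and the first block of
`Ψ(z)` is `q(x*) = x*`. At `z + d`, linearity of `r` and `q` gives `R = A D` and `Q = (I - A) D`,
so the first block of `Ψ(z + d) - Ψ(z)` is `(I - A)(I - A⁻¹ Π A) d_{m+1}`, where `Π = A D (A D)†`
is an orthogonal projection and hence has spectral norm at most `1`. The other blocks of
`Ψ(z + d) - Ψ(z)` are blocks of `d`. -/

open scoped Matrix.Norms.L2Operator
open WithLp

section PseudoInverse

variable {k l : ℕ}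

lemma IsMoorePenrose.isStarProjection_mul {B : Matrix (Fin k) (Fin l) ℝ}
    {P : Matrix (Fin l) (Fin k) ℝ} (h : IsMoorePenrose B P) : IsStarProjection (B * P) where
  isIdempotentElem := by rw [IsIdempotentElem, ← Matrix.mul_assoc, h.1]
  isSelfAdjoint := by
    rw [IsSelfAdjoint, star_eq_conjTranspose, conjTranspose_eq_transpose_of_trivial, h.2.2.1]

lemma isStarProjection_mul_pinv (B : Matrix (Fin k) (Fin l) ℝ) :
    IsStarProjection (B * pinv B) := by
  unfold pinv
  split_ifs with h
  · exact h.choose_spec.isStarProjection_mul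
  · rw [Matrix.mul_zero]
    exact IsStarProjection.zero _

end PseudoInverse

lemma specNorm_eq_l2_opNorm {k l : ℕ} (B : Matrix (Fin k) (Fin l) ℝ) : specNorm B = ‖B‖ := rfl

lemma norm_toLp_mulVec_le {k l : ℕ} (B : Matrix (Fin k) (Fin l) ℝ) (x : Fin l → ℝ) :
    ‖toLp 2 (B *ᵥ x)‖ ≤ ‖B‖ * ‖toLp 2 x‖ :=
  l2_opNorm_mulVec B (toLp 2 x)

lemma norm_mulVec_sub_conj_mulVec_le {n : ℕ} (A P : Matrix (Fin n) (Fin n) ℝ) (hP : ‖P‖ ≤ 1)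
    (x : Fin n → ℝ) :
    ‖toLp 2 ((1 - A) *ᵥ (x - (A⁻¹ * P * A) *ᵥ x))‖
      ≤ (1 + ‖A⁻¹‖ * ‖A‖) * ‖1 - A‖ * ‖toLp 2 x‖ := by
  have hconj : ‖A⁻¹ * P * A‖ ≤ ‖A⁻¹‖ * ‖A‖ :=
    calc ‖A⁻¹ * P * A‖ ≤ ‖A⁻¹‖ * ‖P‖ * ‖A‖ := by
          grw [l2_opNorm_mul, l2_opNorm_mul]
      _ ≤ ‖A⁻¹‖ * ‖A‖ := by
          grw [hP, mul_one]
  calc ‖toLp 2 ((1 - A) *ᵥ (x - (A⁻¹ * P * A) *ᵥ x))‖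
      ≤ ‖1 - A‖ * ‖toLp 2 (x - (A⁻¹ * P * A) *ᵥ x)‖ := norm_toLp_mulVec_le _ _
    _ ≤ ‖1 - A‖ * (‖toLp 2 x‖ + ‖A⁻¹ * P * A‖ * ‖toLp 2 x‖) := by
        rw [toLp_sub]
        gcongr
        exact (norm_sub_le _ _).trans (add_le_add_right (norm_toLp_mulVec_le _ _) _)
    _ ≤ (1 + ‖A⁻¹‖ * ‖A‖) * ‖1 - A‖ * ‖toLp 2 x‖ := by
        grw [hconj]
        exact le_of_eq (by ring)

lemma enormV_nonneg {n m : ℕ} (v : Fin (m + 1) → Fin n → ℝ) : 0 ≤ enormV v :=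
  Real.sqrt_nonneg _

lemma sq_enormV {n m : ℕ} (v : Fin (m + 1) → Fin n → ℝ) :
    enormV v ^ 2 = ∑ i, ‖toLp 2 (v i)‖ ^ 2 := by
  rw [enormV, Real.sq_sqrt (by positivity)]
  simp only [EuclideanSpace.norm_sq_eq, Real.norm_eq_abs, sq_abs]

lemma enormV_le_of_shift {n m : ℕ} {v d : Fin (m + 1) → Fin n → ℝ} {c : ℝ} (hc : 0 ≤ c)
    (hlast : ‖toLp 2 (v (Fin.last m))‖ ≤ c * ‖toLp 2 (d (Fin.last m))‖)
    (hshift : ∀ j : Fin m, v j.castSucc = d j.succ) :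
    enormV v ≤ (c + 1) * enormV d := by
  have hd_last : ‖toLp 2 (d (Fin.last m))‖ ^ 2 ≤ enormV d ^ 2 := by
    rw [sq_enormV]
    exact Finset.single_le_sum (f := fun i => ‖toLp 2 (d i)‖ ^ 2) (fun i _ => by positivity)
      (Finset.mem_univ _)
  have hd_succ : ∑ j : Fin m, ‖toLp 2 (d j.succ)‖ ^ 2 ≤ enormV d ^ 2 := by
    rw [sq_enormV, Fin.sum_univ_succ]
    exact le_add_of_nonneg_left (by positivity)
  have hsq : enormV v ^ 2 ≤ ((c + 1) * enormV d) ^ 2 := by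
    rw [sq_enormV, Fin.sum_univ_castSucc]
    simp only [hshift]
    have : ‖toLp 2 (v (Fin.last m))‖ ^ 2 ≤ c ^ 2 * enormV d ^ 2 := by
      grw [hlast, mul_pow, hd_last]
    nlinarith [mul_nonneg hc (sq_nonneg (enormV d))]
  exact (sq_le_sq₀ (enormV_nonneg v) (mul_nonneg (by linarith) (enormV_nonneg d))).mp hsq

section AndersonMap

variable {n m : ℕ}

lemma Qmat_eq_mul_Dmat {q : (Fin n → ℝ) → Fin n → ℝ} {M : Matrix (Fin n) (Fin n) ℝ}
    (hq : ∀ x y, q x - q y = M *ᵥ (x - y)) (z : Fin (m + 1) → Fin n → ℝ) :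
    Qmat q z = M * Dmat z := by
  ext i j
  simp only [Qmat, Dmat, of_apply, hq, mulVec, dotProduct, mul_apply]

lemma Rmat_eq_mul_Dmat {r : (Fin n → ℝ) → Fin n → ℝ} {M : Matrix (Fin n) (Fin n) ℝ}
    (hr : ∀ x y, r x - r y = M *ᵥ (x - y)) (z : Fin (m + 1) → Fin n → ℝ) :
    Rmat r z = M * Dmat z :=
  Qmat_eq_mul_Dmat hr z

lemma betaF_eq_zero {r : (Fin n → ℝ) → Fin n → ℝ} {z : Fin (m + 1) → Fin n → ℝ}
    (hz : r (z (Fin.last m)) = 0) : betaF r z = 0 := by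
  rw [betaF, hz, mulVec_zero, neg_zero]

lemma PsiM_last (q : (Fin n → ℝ) → Fin n → ℝ) (z : Fin (m + 1) → Fin n → ℝ) :
    PsiM q z (Fin.last m) = q (z (Fin.last m)) + Qmat q z *ᵥ betaF (fun x => x - q x) z := by
  simp [PsiM]

lemma PsiM_castSucc (q : (Fin n → ℝ) → Fin n → ℝ) (z : Fin (m + 1) → Fin n → ℝ) (j : Fin m) :
    PsiM q z j.castSucc = z j.succ := by
  simp [PsiM]

lemma PsiM_sub_last_of_isFixedPt {A : Matrix (Fin n) (Fin n) ℝ} {q : (Fin n → ℝ) → Fin n → ℝ}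
    (hq : ∀ x y, q x - q y = (1 - A) *ᵥ (x - y)) {z : Fin (m + 1) → Fin n → ℝ}
    (hz : q (z (Fin.last m)) = z (Fin.last m)) (d : Fin (m + 1) → Fin n → ℝ) :
    (PsiM q (z + d) - PsiM q z) (Fin.last m) =
      (1 - A) *ᵥ (d (Fin.last m) -
        (Dmat (z + d) * pinv (A * Dmat (z + d)) * A) *ᵥ d (Fin.last m)) := by
  have hr : ∀ x y, (x - q x) - (y - q y) = A *ᵥ (x - y) := by
    intro x y
    rw [sub_sub_sub_comm, hq, sub_mulVec, one_mulVec, sub_sub_cancel]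
  have hr_z : z (Fin.last m) - q (z (Fin.last m)) = 0 := sub_eq_zero.mpr hz.symm
  have hr_zd : (z + d) (Fin.last m) - q ((z + d) (Fin.last m)) = A *ᵥ d (Fin.last m) := by
    rw [← sub_zero (_ - _), ← hr_z, hr, Pi.add_apply, add_sub_cancel_left]
  rw [Pi.sub_apply, PsiM_last q z, betaF_eq_zero hr_z, mulVec_zero, add_zero, PsiM_last,
    add_sub_right_comm, hq, Pi.add_apply, add_sub_cancel_left, Qmat_eq_mul_Dmat hq,
    betaF, Rmat_eq_mul_Dmat (r := fun x => x - q x) hr, hr_zd, mulVec_neg, ← sub_eq_add_neg,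
    mulVec_sub, mulVec_mulVec, mulVec_mulVec, mulVec_mulVec]
  simp only [Matrix.mul_assoc]

lemma Dmat_mul_pinv_mul_eq_conj {A : Matrix (Fin n) (Fin n) ℝ} (hA : IsUnit A.det)
    (D : Matrix (Fin n) (Fin m) ℝ) :
    D * pinv (A * D) * A = A⁻¹ * (A * D * pinv (A * D)) * A := by
  rw [Matrix.mul_assoc A, ← Matrix.mul_assoc A⁻¹, nonsing_inv_mul _ hA, Matrix.one_mul]

end AndersonMap

/-- linear case. The AA(m) map `Ψ` is Lipschitz at any `z` whose first block
is `z_{m+1} = x* = A⁻¹b`, with constant `L = (1 + ‖A⁻¹‖‖A‖)‖I-A‖ + 1` (spectral norms). -/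
theorem stmt14 {n m : ℕ} (A : Matrix (Fin n) (Fin n) ℝ) (hA : IsUnit A.det)
    (b : Fin n → ℝ) (q : (Fin n → ℝ) → Fin n → ℝ)
    (hq : q = fun x => (1 - A).mulVec x + b)
    (z : Fin (m + 1) → Fin n → ℝ) (hz : z (Fin.last m) = A⁻¹.mulVec b) :
    ∀ d : Fin (m + 1) → Fin n → ℝ,
      enormV (PsiM q (z + d) - PsiM q z) ≤
        ((1 + specNorm A⁻¹ * specNorm A) * specNorm (1 - A) + 1) * enormV d := by
  intro d
  subst hq
  have hq_sub : ∀ x y, (1 - A) *ᵥ x + b - ((1 - A) *ᵥ y + b) = (1 - A) *ᵥ (x - y) := by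
    intro x y
    rw [mulVec_sub, add_sub_add_right_eq_sub]
  have hfix : (1 - A) *ᵥ z (Fin.last m) + b = z (Fin.last m) := by
    rw [sub_mulVec, one_mulVec, hz, mulVec_mulVec, mul_nonsing_inv _ hA, one_mulVec,
      sub_add_cancel]
  simp only [specNorm_eq_l2_opNorm]
  refine enormV_le_of_shift (by positivity) ?_ fun j => ?_
  · rw [PsiM_sub_last_of_isFixedPt hq_sub hfix, Dmat_mul_pinv_mul_eq_conj hA]
    exact norm_mulVec_sub_conj_mulVec_le _ _ (isStarProjection_mul_pinv _).norm_le _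
  · rw [Pi.sub_apply, PsiM_castSucc, PsiM_castSucc, Pi.add_apply, add_sub_cancel_left]
end
end

section
/- Linear case directional derivative of AA(m): for q(x) = Mx + b with A = I - M invertible, the directional derivative of Ψ at z* = (x*,…,x*) in direction d = (d_{m+1},…,d₁) exists and its first block equals M d_{m+1} + M D(d) β̂(d), where β̂(d) = -(A D(d))† A d_{m+1}, and its remaining blocks are (d_{m+1}, …, d₂). -/
open scoped Topology
open Filter Matrix

noncomputable section

lemma mp_unique {k l : ℕ} {B : Matrix (Fin k) (Fin l) ℝ} {P P' : Matrix (Fin l) (Fin k) ℝ}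
    (hP : IsMoorePenrose B P) (hP' : IsMoorePenrose B P') : P = P' := by
  obtain ⟨h1, h2, h3, h4⟩ := hP
  obtain ⟨h1', h2', h3', h4'⟩ := hP'
  have e1 : B * P = B * P' := by
    calc B * P = (B * P)ᵀ := h3.symm
      _ = Pᵀ * Bᵀ := Matrix.transpose_mul _ _
      _ = Pᵀ * (B * P' * B)ᵀ := by rw [h1']
      _ = Pᵀ * (Bᵀ * (B * P')ᵀ) := by rw [Matrix.transpose_mul]
      _ = Pᵀ * (Bᵀ * (B * P')) := by rw [h3']
      _ = (Pᵀ * Bᵀ) * (B * P') := by rw [Matrix.mul_assoc]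
      _ = (B * P)ᵀ * (B * P') := by rw [Matrix.transpose_mul]
      _ = (B * P) * (B * P') := by rw [h3]
      _ = (B * P * B) * P' := by simp only [Matrix.mul_assoc]
      _ = B * P' := by rw [h1]
  have e2 : P * B = P' * B := by
    calc P * B = (P * B)ᵀ := h4.symm
      _ = Bᵀ * Pᵀ := Matrix.transpose_mul _ _
      _ = (B * P' * B)ᵀ * Pᵀ := by rw [h1']
      _ = (B * (P' * B))ᵀ * Pᵀ := by rw [Matrix.mul_assoc]
      _ = ((P' * B)ᵀ * Bᵀ) * Pᵀ := by rw [Matrix.transpose_mul]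
      _ = ((P' * B) * Bᵀ) * Pᵀ := by rw [h4']
      _ = (P' * B) * (Bᵀ * Pᵀ) := by rw [Matrix.mul_assoc]
      _ = (P' * B) * (P * B)ᵀ := by rw [Matrix.transpose_mul]
      _ = (P' * B) * (P * B) := by rw [h4]
      _ = P' * (B * P * B) := by simp only [Matrix.mul_assoc]
      _ = P' * B := by rw [h1]
  calc P = P * B * P := h2.symm
    _ = P' * B * P := by rw [e2]
    _ = P' * (B * P) := Matrix.mul_assoc _ _ _
    _ = P' * (B * P') := by rw [e1]
    _ = P' * B * P' := (Matrix.mul_assoc _ _ _).symm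
    _ = P' := h2'

lemma mp_smul {k l : ℕ} {B : Matrix (Fin k) (Fin l) ℝ} {P : Matrix (Fin l) (Fin k) ℝ}
    (c : ℝ) (hc : c ≠ 0) (hP : IsMoorePenrose B P) : IsMoorePenrose (c • B) (c⁻¹ • P) := by
  obtain ⟨h1, h2, h3, h4⟩ := hP
  have hcc : c * c⁻¹ = 1 := mul_inv_cancel₀ hc
  have hcc' : c⁻¹ * c = 1 := inv_mul_cancel₀ hc
  refine ⟨?_, ?_, ?_, ?_⟩ <;>
    simp only [Matrix.smul_mul, Matrix.mul_smul, smul_smul, Matrix.transpose_smul,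
      h1, h2, h3, h4] <;>
    simp [hcc, hcc']

lemma pinv_isMP {k l : ℕ} {B : Matrix (Fin k) (Fin l) ℝ}
    (h : ∃ P, IsMoorePenrose B P) : IsMoorePenrose B (pinv B) := by
  rw [pinv, dif_pos h]; exact h.choose_spec

lemma pinv_smul {k l : ℕ} (B : Matrix (Fin k) (Fin l) ℝ) {c : ℝ} (hc : c ≠ 0) :
    pinv (c • B) = c⁻¹ • pinv B := by
  by_cases hex : ∃ P, IsMoorePenrose B P
  · have h1 := pinv_isMP hex
    have h2 : ∃ P, IsMoorePenrose (c • B) P := ⟨c⁻¹ • pinv B, mp_smul c hc h1⟩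
    exact mp_unique (pinv_isMP h2) (mp_smul c hc h1)
  · have hex2 : ¬ ∃ P, IsMoorePenrose (c • B) P := by
      rintro ⟨P, hP⟩
      refine hex ⟨c • P, ?_⟩
      have := mp_smul (B := c • B) c⁻¹ (inv_ne_zero hc) hP
      simpa [smul_smul, inv_mul_cancel₀ hc, inv_inv] using this
    rw [pinv, pinv, dif_neg hex, dif_neg hex2, smul_zero]

lemma mul_Dmat_apply {n m : ℕ} (A : Matrix (Fin n) (Fin n) ℝ) (d : Fin (m + 1) → Fin n → ℝ)
    (i : Fin n) (j : Fin m) :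
    (A * Dmat d) i j = (A.mulVec (d (Fin.last m)) - A.mulVec (d (Fin.rev j.succ))) i := by
  simp [Matrix.mul_apply, Matrix.mulVec, dotProduct, Dmat, mul_sub,
    Finset.sum_sub_distrib]

/-- linear case directional derivative of the AA(m) map `Ψ` at
`z* = (x*,…,x*)` in direction `d = (d_{m+1},…,d₁)`: the first block of `𝔇Ψ(z*, d)` is
`M d_{m+1} + M D(d) β̂(d)` with `M = I - A` and `β̂(d) = -(A D(d))† A d_{m+1}`, and the
remaining blocks are `(d_{m+1}, …, d₂)`. -/
theorem stmt16 {n m : ℕ} (A : Matrix (Fin n) (Fin n) ℝ) (hA : IsUnit A.det)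
    (b : Fin n → ℝ) (q : (Fin n → ℝ) → Fin n → ℝ)
    (hq : q = fun x => (1 - A).mulVec x + b)
    (xs : Fin n → ℝ) (hxs : A.mulVec xs = b)
    (d : Fin (m + 1) → Fin n → ℝ) :
    Tendsto
      (fun h : ℝ => h⁻¹ • (PsiM q ((fun _ => xs) + h • d) - PsiM q (fun _ => xs)))
      (𝓝[>] 0)
      (𝓝 (fun i => Fin.lastCases
        ((1 - A).mulVec (d (Fin.last m)) +
          ((1 - A) * Dmat d).mulVec
            (-(pinv (A * Dmat d)).mulVec (A.mulVec (d (Fin.last m)))))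
        (fun j : Fin m => d j.succ) i)) := by
  have key : ∀ h : ℝ, h ≠ 0 →
      h⁻¹ • (PsiM q ((fun _ => xs) + h • d) - PsiM q (fun _ => xs)) =
      (fun i => Fin.lastCases
        ((1 - A).mulVec (d (Fin.last m)) +
          ((1 - A) * Dmat d).mulVec
            (-(pinv (A * Dmat d)).mulVec (A.mulVec (d (Fin.last m)))))
        (fun j : Fin m => d j.succ) i) := by
    intro h hh
    subst hq
    set q : (Fin n → ℝ) → Fin n → ℝ := fun x => (1 - A).mulVec x + b with hqdef
    set z : Fin (m + 1) → Fin n → ℝ := (fun _ => xs) + h • d with hz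
    have hzk : ∀ k, z k = xs + h • d k := fun k => rfl
    have hq' : ∀ v : Fin n → ℝ, q (xs + v) = xs + (1 - A).mulVec v := by
      intro v
      show (1 - A).mulVec (xs + v) + b = _
      rw [Matrix.mulVec_add, Matrix.sub_mulVec, Matrix.sub_mulVec, Matrix.one_mulVec,
        Matrix.one_mulVec, ← hxs]
      abel
    have hqxs : q xs = xs := by
      have := hq' 0
      simpa using this
    have hrv : ∀ v : Fin n → ℝ, (xs + v) - q (xs + v) = A.mulVec v := by
      intro v
      rw [hq', Matrix.sub_mulVec, Matrix.one_mulVec]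
      abel
    have hrk : ∀ k, z k - q (z k) = h • A.mulVec (d k) := by
      intro k
      rw [hzk, hrv, Matrix.mulVec_smul]
    have hR : Rmat (fun x => x - q x) z = h • (A * Dmat d) := by
      ext i j
      show ((z (Fin.last m) - q (z (Fin.last m))) - (z (Fin.rev j.succ) - q (z (Fin.rev j.succ)))) i
        = (h • (A * Dmat d)) i j
      rw [hrk, hrk]
      simp [mul_Dmat_apply, mul_sub]
    have hQ : Qmat q z = h • ((1 - A) * Dmat d) := by
      ext i j
      rw [Matrix.smul_apply, mul_Dmat_apply]
      show (q (z (Fin.last m)) - q (z (Fin.rev j.succ))) i = _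
      rw [hzk, hzk, hq', hq', Matrix.mulVec_smul, Matrix.mulVec_smul]
      simp [mul_sub]
    have hbeta : betaF (fun x => x - q x) z
        = -(pinv (A * Dmat d)).mulVec (A.mulVec (d (Fin.last m))) := by
      rw [betaF, hR, pinv_smul _ hh]
      have e : z (Fin.last m) - q (z (Fin.last m)) = h • A.mulVec (d (Fin.last m)) := hrk _
      show -(h⁻¹ • pinv (A * Dmat d)).mulVec (z (Fin.last m) - q (z (Fin.last m))) = _
      rw [e, Matrix.smul_mulVec, Matrix.mulVec_smul, smul_smul,
        inv_mul_cancel₀ hh, one_smul]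
    have hQ0 : Qmat (m := m) q (fun _ => xs) = 0 := by
      ext i j
      simp [Qmat]
    funext i
    induction i using Fin.lastCases with
    | last =>
      simp only [Pi.smul_apply, Pi.sub_apply, PsiM, Fin.lastCases_last, hQ0,
        Matrix.zero_mulVec, hqxs, add_zero, hbeta, hQ, hzk, hq', Matrix.mulVec_smul,
        Matrix.smul_mulVec]
      have e : xs + h • (1 - A).mulVec (d (Fin.last m))
            + h • ((1 - A) * Dmat d).mulVec (-(pinv (A * Dmat d)).mulVec (A.mulVec (d (Fin.last m))))
            - xs
          = h • ((1 - A).mulVec (d (Fin.last m))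
            + ((1 - A) * Dmat d).mulVec (-(pinv (A * Dmat d)).mulVec (A.mulVec (d (Fin.last m))))) := by
        rw [smul_add]; abel
      calc h⁻¹ • (xs + h • (1 - A).mulVec (d (Fin.last m))
            + h • ((1 - A) * Dmat d).mulVec (-(pinv (A * Dmat d)).mulVec (A.mulVec (d (Fin.last m))))
            - xs)
          = h⁻¹ • (h • ((1 - A).mulVec (d (Fin.last m))
            + ((1 - A) * Dmat d).mulVec (-(pinv (A * Dmat d)).mulVec (A.mulVec (d (Fin.last m)))))) := by
            rw [e]
        _ = _ := by rw [smul_smul, inv_mul_cancel₀ hh, one_smul]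
    | cast j =>
      simp only [Pi.smul_apply, Pi.sub_apply, PsiM, Fin.lastCases_castSucc, hzk]
      have e : xs + h • d j.succ - xs = h • d j.succ := by abel
      rw [e, smul_smul, inv_mul_cancel₀ hh, one_smul]
  refine Tendsto.congr' ?_ tendsto_const_nhds
  filter_upwards [self_mem_nhdsWithin] with h hh
  exact (key h (ne_of_gt hh)).symm
end
end

section
/- Gateaux derivative at z* for AA(1) with equal-direction input, matrix form: defining β̂(d) = -⟨A d₁, A(d₁-d₂)⟩/‖A(d₁-d₂)‖² for d₁ ≠ d₂ and β̂(d) = 0 for d₁ = d₂, the directional derivative satisfies 𝔇Ψ(z*, d) = [[(1+β̂(d))M, -β̂(d)M],[I, 0]]·d for all directions d ∈ ℝ²ⁿ, and β̂ is positively homogeneous of degree 0 (β̂(t d) = β̂(d) for t > 0), so 𝔇Ψ(z*, ·) is positively homogeneous of degree 1. -/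
open scoped RealInnerProductSpace Topology
open Filter

noncomputable section

open Classical in
/-- `β̂(d)`: the limiting AA(1) coefficient in direction `d = (d₁, d₂)`. -/
def betaHat {n : ℕ} (A : E n →L[ℝ] E n) (d : E n × E n) : ℝ :=
  if d.1 = d.2 then 0 else -⟪A d.1, A (d.1 - d.2)⟫ / ‖A (d.1 - d.2)‖ ^ 2

/-- The Gateaux derivative map `d ↦ [[(1+β̂(d))M, -β̂(d)M],[I,0]]·d` of AA(1) at `z*`. -/
def GMap {n : ℕ} (M A : E n →L[ℝ] E n) (d : E n × E n) : E n × E n :=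
  ((1 + betaHat A d) • M d.1 - betaHat A d • M d.2, d.1)

private lemma aux_ratio (t I N : ℝ) (ht : 0 < t) :
    -(t * (t * I)) / (t * N) ^ 2 = -I / N ^ 2 := by
  rcases eq_or_ne N 0 with h0 | h0
  · simp [h0]
  · field_simp

/-- the directional derivative of `Ψ` at `z* = (x*,x*)` exists in every
direction `d` and is given by the matrix form `𝔇Ψ(z*,d) = [[(1+β̂(d))M, -β̂(d)M],[I,0]]·d`;
moreover `β̂` is positively homogeneous of degree 0 and `𝔇Ψ(z*,·)` of degree 1. -/
theorem stmt18 {n : ℕ} (q : E n → E n) (xs : E n) (hfix : q xs = xs)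
    (M : E n →L[ℝ] E n) (hM : HasFDerivAt q M xs)
    (A : E n →L[ℝ] E n) (hA : A = ContinuousLinearMap.id ℝ (E n) - M)
    (hAinv : Function.Bijective A) :
    (∀ d : E n × E n,
      Tendsto (fun h : ℝ => h⁻¹ • (Psi q ((xs, xs) + h • d) - Psi q (xs, xs)))
        (𝓝[>] 0) (𝓝 (GMap M A d))) ∧
    (∀ t : ℝ, 0 < t → ∀ d : E n × E n, betaHat A (t • d) = betaHat A d) ∧
    (∀ t : ℝ, 0 < t → ∀ d : E n × E n, GMap M A (t • d) = t • GMap M A d) := by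
  have hAinj : Function.Injective A := hAinv.1
  -- β̂ homogeneity
  have hbh : ∀ t : ℝ, 0 < t → ∀ d : E n × E n, betaHat A (t • d) = betaHat A d := by
    intro t ht d
    by_cases hd : d.1 = d.2
    · simp [betaHat, hd, Prod.smul_fst, Prod.smul_snd]
    · have hne : (t • d).1 ≠ (t • d).2 := by
        simp only [Prod.smul_fst, Prod.smul_snd]
        intro h; exact hd (smul_right_injective _ (ne_of_gt ht) h)
      rw [betaHat, betaHat, if_neg hne, if_neg hd]
      simp only [Prod.smul_fst, Prod.smul_snd]
      have h1 : (t • d.1 : E n) - t • d.2 = t • (d.1 - d.2) := (smul_sub t _ _).symm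
      rw [h1, map_smul, map_smul, real_inner_smul_left, real_inner_smul_right, norm_smul,
        Real.norm_eq_abs, abs_of_pos ht]
      exact aux_ratio _ _ _ ht
  -- line derivative of q
  have key : ∀ v : E n, Tendsto (fun h : ℝ => h⁻¹ • (q (xs + h • v) - xs)) (𝓝[>] (0 : ℝ))
      (𝓝 (M v)) := by
    intro v
    have h1 : HasDerivAt (fun t : ℝ => q (xs + t • v)) (M v) 0 := hM.hasLineDerivAt v
    have h2 := (hasDerivAt_iff_tendsto_slope.mp h1).mono_left
      (nhdsWithin_mono (0 : ℝ) (fun h hh => ne_of_gt hh))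
    refine h2.congr (fun h => ?_)
    simp [slope, hfix]
  -- line derivative of the residual
  have hr : ∀ v : E n, Tendsto (fun h : ℝ => h⁻¹ • rr q (xs + h • v)) (𝓝[>] (0 : ℝ))
      (𝓝 (A v)) := by
    intro v
    have hAv : A v = v - M v := by rw [hA]; simp
    have h1 : Tendsto (fun h : ℝ => v - h⁻¹ • (q (xs + h • v) - xs)) (𝓝[>] (0 : ℝ))
        (𝓝 (v - M v)) := tendsto_const_nhds.sub (key v)
    rw [hAv]
    refine h1.congr' ?_
    filter_upwards [self_mem_nhdsWithin] with h hh
    have hne : (h : ℝ) ≠ 0 := ne_of_gt hh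
    have h2 : h⁻¹ • (h • v) = v := inv_smul_smul₀ hne v
    simp only [rr, smul_sub, smul_add, h2]
    abel
  refine ⟨?_, hbh, ?_⟩
  · intro d
    have hzfix : Psi q (xs, xs) = (xs, xs) := by
      simp [Psi, beta, hfix]
    have hF : ∀ h : ℝ, 0 < h →
        h⁻¹ • (Psi q ((xs, xs) + h • d) - Psi q (xs, xs)) =
        (h⁻¹ • (q (xs + h • d.1) - xs) +
          beta q (xs + h • d.1, xs + h • d.2) •
            (h⁻¹ • (q (xs + h • d.1) - q (xs + h • d.2))),
         d.1) := by
      intro h hh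
      have hne : (h : ℝ) ≠ 0 := ne_of_gt hh
      rw [hzfix]
      have hp : (xs, xs) + h • d = (xs + h • d.1, xs + h • d.2) := by
        ext <;> simp
      rw [hp]
      refine Prod.ext_iff.mpr ⟨?_, ?_⟩
      · show h⁻¹ • (q (xs + h • d.1) +
            beta q (xs + h • d.1, xs + h • d.2) • (q (xs + h • d.1) - q (xs + h • d.2)) - xs) = _
        module
      · show h⁻¹ • ((xs + h • d.1) - xs) = d.1
        rw [add_sub_cancel_left, inv_smul_smul₀ hne]
    by_cases hd : d.1 = d.2
    · -- equal directions: β vanishes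
      have hb0 : betaHat A d = 0 := by simp [betaHat, hd]
      have hG : GMap M A d = (M d.1, d.1) := by simp [GMap, hb0]
      rw [hG]
      refine Tendsto.congr' ?_ ((key d.1).prodMk_nhds tendsto_const_nhds)
      filter_upwards [self_mem_nhdsWithin] with h hh
      rw [hF h hh, ← hd]
      simp
    · -- distinct directions
      have hsub : d.1 - d.2 ≠ 0 := sub_ne_zero.mpr hd
      have hAd : A (d.1 - d.2) ≠ 0 := fun h0 => hsub (hAinj (by rw [h0, map_zero]))
      have hwt : Tendsto (fun h : ℝ => h⁻¹ • (rr q (xs + h • d.1) - rr q (xs + h • d.2)))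
          (𝓝[>] (0 : ℝ)) (𝓝 (A (d.1 - d.2))) := by
        have := (hr d.1).sub (hr d.2)
        rw [← map_sub] at this
        exact this.congr (fun h => (smul_sub _ _ _).symm)
      have hev : ∀ᶠ h in 𝓝[>] (0 : ℝ),
          rr q (xs + h • d.1) - rr q (xs + h • d.2) ≠ 0 := by
        filter_upwards [hwt.eventually_ne hAd] with h hw h0
        exact hw (by rw [h0, smul_zero])
      have hden_ne : ‖A (d.1 - d.2)‖ ^ 2 ≠ 0 := pow_ne_zero 2 (norm_ne_zero_iff.mpr hAd)
      have hnum : Tendsto (fun h : ℝ =>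
          -⟪h⁻¹ • rr q (xs + h • d.1), h⁻¹ • (rr q (xs + h • d.1) - rr q (xs + h • d.2))⟫)
          (𝓝[>] (0 : ℝ)) (𝓝 (-⟪A d.1, A (d.1 - d.2)⟫)) := ((hr d.1).inner hwt).neg
      have hden : Tendsto (fun h : ℝ =>
          ‖h⁻¹ • (rr q (xs + h • d.1) - rr q (xs + h • d.2))‖ ^ 2)
          (𝓝[>] (0 : ℝ)) (𝓝 (‖A (d.1 - d.2)‖ ^ 2)) := hwt.norm.pow 2
      have hbH : betaHat A d = -⟪A d.1, A (d.1 - d.2)⟫ / ‖A (d.1 - d.2)‖ ^ 2 := by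
        rw [betaHat, if_neg hd]
      have hbeta : Tendsto (fun h : ℝ => beta q (xs + h • d.1, xs + h • d.2))
          (𝓝[>] (0 : ℝ)) (𝓝 (betaHat A d)) := by
        rw [hbH]
        refine Tendsto.congr' ?_ (hnum.div hden hden_ne)
        filter_upwards [self_mem_nhdsWithin, hev] with h hh hne0
        have hhp : (0 : ℝ) < h := hh
        have hrr : rr q (xs + h • d.1) ≠ rr q (xs + h • d.2) := sub_ne_zero.mp hne0
        simp only [Pi.div_apply]
        rw [beta, if_neg hrr]
        rw [real_inner_smul_left, real_inner_smul_right, norm_smul,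
          Real.norm_eq_abs, abs_of_pos (inv_pos.mpr hhp)]
        exact aux_ratio _ _ _ (inv_pos.mpr hhp)
      have hqd : Tendsto (fun h : ℝ => h⁻¹ • (q (xs + h • d.1) - q (xs + h • d.2)))
          (𝓝[>] (0 : ℝ)) (𝓝 (M d.1 - M d.2)) := by
        refine ((key d.1).sub (key d.2)).congr (fun h => ?_)
        rw [← smul_sub, sub_sub_sub_cancel_right]
      have hF1 : Tendsto (fun h : ℝ => h⁻¹ • (q (xs + h • d.1) - xs) +
          beta q (xs + h • d.1, xs + h • d.2) • (h⁻¹ • (q (xs + h • d.1) - q (xs + h • d.2))))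
          (𝓝[>] (0 : ℝ)) (𝓝 (M d.1 + betaHat A d • (M d.1 - M d.2))) :=
        (key d.1).add (hbeta.smul hqd)
      have hG : GMap M A d = (M d.1 + betaHat A d • (M d.1 - M d.2), d.1) := by
        refine Prod.ext_iff.mpr ⟨?_, rfl⟩
        show (1 + betaHat A d) • M d.1 - betaHat A d • M d.2 = _
        module
      rw [hG]
      refine Tendsto.congr' ?_ (hF1.prodMk_nhds tendsto_const_nhds)
      filter_upwards [self_mem_nhdsWithin] with h hh
      exact (hF h hh).symm
  · intro t ht d
    have hb := hbh t ht d
    refine Prod.ext_iff.mpr ⟨?_, ?_⟩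
    · show (1 + betaHat A (t • d)) • M (t • d).1 - betaHat A (t • d) • M (t • d).2 = _
      rw [hb]
      simp only [Prod.smul_fst, Prod.smul_snd, map_smul]
      show _ = t • ((1 + betaHat A d) • M d.1 - betaHat A d • M d.2)
      module
    · show (t • d).1 = t • d.1
      rfl
end
end

section
/- Non-differentiability of Ψ for AA(1) in dimension n ≥ 1: assuming A = I - q'(x*) invertible and M = q'(x*) ≠ 0, there is no linear map T : ℝ²ⁿ → ℝ²ⁿ such that 𝔇Ψ(z*, d) = T d for all d, where 𝔇Ψ(z*, d) = [[(1+β̂(d))M, -β̂(d)M],[I,0]] d with β̂(d) = -⟨A d₁, A(d₁-d₂)⟩/‖A(d₁-d₂)‖² for d₁ ≠ d₂ and β̂(d) = 0 for d₁ = d₂. Consequently Ψ is not differentiable at z*. -/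
/-!
Pick `v` with `M v ≠ 0`, so that `A v ≠ 0`, and look at the directions `(v, v)`, `(v, 0)` and
`(0, v)`. The coefficient `β` vanishes on the diagonal and when the first argument is `x*`,
while `β(x, x*) = -1` whenever `r(x) ≠ 0`, so that `Ψ(x, x*) = (x*, x)`; the same holds for `β̂`.
Hence both `𝔇Ψ(z*, ·)` and the line derivatives of `Ψ` at `z*` take the values `(M v, v)`,
`(0, v)` and `(0, 0)` in these directions, and these are not additive since `M v ≠ 0`.
-/

open scoped RealInnerProductSpace Topology
open Filter

noncomputable section

section Linear

variable {R V W : Type*} [Semiring R] [AddCommMonoid V] [Module R V] [AddCommMonoid W] [Module R W]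

theorem not_exists_linearMap_of_apply_ne {F : V × V → W} {v : V}
    (h : F (v, v) ≠ F (v, 0) + F (0, v)) : ¬ ∃ T : V × V →ₗ[R] W, ∀ d, F d = T d := by
  rintro ⟨T, hT⟩
  refine h ?_
  rw [hT, hT, hT, ← map_add, Prod.mk_add_mk, add_zero, zero_add]

end Linear

section GMap

variable {n : ℕ} (M A : E n →L[ℝ] E n) (v : E n)

theorem betaHat_self : betaHat A (v, v) = 0 := if_pos rfl

theorem betaHat_zero_left : betaHat A (0, v) = 0 := by
  simp [betaHat]

theorem betaHat_zero_right {v : E n} (hAv : A v ≠ 0) : betaHat A (v, 0) = -1 := by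
  have hv : v ≠ 0 := fun h => hAv (by rw [h, map_zero])
  have hnorm : ‖A v‖ ^ 2 ≠ 0 := pow_ne_zero 2 (norm_ne_zero_iff.2 hAv)
  rw [betaHat, if_neg hv, sub_zero, real_inner_self_eq_norm_sq, neg_div, div_self hnorm]

theorem GMap_self : GMap M A (v, v) = (M v, v) := by
  simp [GMap, betaHat_self]

theorem GMap_zero_left : GMap M A (0, v) = (0, 0) := by
  simp [GMap, betaHat_zero_left]

theorem GMap_zero_right {v : E n} (hAv : A v ≠ 0) : GMap M A (v, 0) = (0, v) := by
  simp [GMap, betaHat_zero_right A hAv]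

end GMap

section Psi

variable {n : ℕ} {q : E n → E n} {xs : E n}

theorem rr_eq_zero_of_fixed_s19 (hfix : q xs = xs) : rr q xs = 0 := sub_eq_zero.2 hfix.symm

theorem hasFDerivAt_rr {M : E n →L[ℝ] E n} (hM : HasFDerivAt q M xs) :
    HasFDerivAt (rr q) (ContinuousLinearMap.id ℝ (E n) - M) xs :=
  (hasFDerivAt_id xs).sub hM

theorem beta_self (x : E n) : beta q (x, x) = 0 := if_pos rfl

theorem beta_fixed_left (hfix : q xs = xs) (y : E n) : beta q (xs, y) = 0 := by
  by_cases h : rr q xs = rr q y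
  · exact if_pos h
  · simp [beta, rr_eq_zero_of_fixed_s19 hfix]

theorem beta_fixed_right (hfix : q xs = xs) {x : E n} (hx : rr q x ≠ 0) :
    beta q (x, xs) = -1 := by
  have hnorm : ‖rr q x‖ ^ 2 ≠ 0 := pow_ne_zero 2 (norm_ne_zero_iff.2 hx)
  rw [beta, rr_eq_zero_of_fixed_s19 hfix, if_neg hx, sub_zero, real_inner_self_eq_norm_sq, neg_div,
    div_self hnorm]

theorem Psi_self (x : E n) : Psi q (x, x) = (q x, x) := by
  simp [Psi, beta_self]

theorem Psi_fixed_left (hfix : q xs = xs) (y : E n) : Psi q (xs, y) = (xs, xs) := by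
  simp [Psi, beta_fixed_left hfix, hfix]

theorem Psi_fixed_right (hfix : q xs = xs) {x : E n} (hx : rr q x ≠ 0) :
    Psi q (x, xs) = (xs, x) := by
  rw [Psi, beta_fixed_right hfix hx, hfix, neg_one_smul, neg_sub, add_sub_cancel]

theorem hasLineDerivAt_Psi_zero_left (hfix : q xs = xs) (v : E n) :
    HasLineDerivAt ℝ (Psi q) (0, 0) (xs, xs) (0, v) := by
  have hconst : (fun t : ℝ => Psi q ((xs, xs) + t • (0, v))) = fun _ => (xs, xs) := by
    funext t
    simpa using Psi_fixed_left hfix (xs + t • v)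
  rw [HasLineDerivAt, hconst]
  exact hasDerivAt_const 0 _

theorem hasLineDerivAt_Psi_self {M : E n →L[ℝ] E n} (hM : HasFDerivAt q M xs) (v : E n) :
    HasLineDerivAt ℝ (Psi q) (M v, v) (xs, xs) (v, v) := by
  have hdiag : (fun t : ℝ => Psi q ((xs, xs) + t • (v, v)))
      = fun t => (q (xs + t • v), xs + t • v) := by
    funext t
    simpa using Psi_self (q := q) (xs + t • v)
  rw [HasLineDerivAt, hdiag]
  exact (hM.hasLineDerivAt v).prodMk ((hasFDerivAt_id xs).hasLineDerivAt v)

theorem hasLineDerivAt_Psi_zero_right (hfix : q xs = xs) {M : E n →L[ℝ] E n}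
    (hM : HasFDerivAt q M xs) {v : E n} (hAv : (ContinuousLinearMap.id ℝ (E n) - M) v ≠ 0) :
    HasLineDerivAt ℝ (Psi q) (0, v) (xs, xs) (v, 0) := by
  have hr : ∀ᶠ t in 𝓝[≠] (0 : ℝ), rr q (xs + t • v) ≠ 0 :=
    ((hasFDerivAt_rr hM).hasLineDerivAt v).eventually_ne hAv
  have hline : (fun t : ℝ => Psi q ((xs, xs) + t • (v, 0))) =ᶠ[𝓝 0] fun t => (xs, xs + t • v) := by
    filter_upwards [eventually_nhdsWithin_iff.1 hr] with t ht
    by_cases ht0 : t = 0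
    · simp [ht0, Psi_fixed_left hfix]
    · simpa using Psi_fixed_right hfix (ht ht0)
  rw [HasLineDerivAt, hline.hasDerivAt_iff]
  exact (hasDerivAt_const 0 xs).prodMk ((hasFDerivAt_id xs).hasLineDerivAt v)

end Psi

/-- non-differentiability of `Ψ` for AA(1): if `M = q'(x*) ≠ 0` and
`A = I - M` is invertible, then the directional derivative map `𝔇Ψ(z*,·)` is not linear
(no linear map `T` satisfies `𝔇Ψ(z*,d) = T d` for all `d`), and consequently `Ψ` is not
differentiable at `z* = (x*,x*)`. -/
theorem stmt19 {n : ℕ} (q : E n → E n) (xs : E n) (hfix : q xs = xs)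
    (M : E n →L[ℝ] E n) (hM : HasFDerivAt q M xs) (hM0 : M ≠ 0)
    (A : E n →L[ℝ] E n) (hA : A = ContinuousLinearMap.id ℝ (E n) - M)
    (hAinv : Function.Bijective A) :
    (¬ ∃ T : (E n × E n) →ₗ[ℝ] (E n × E n), ∀ d : E n × E n, GMap M A d = T d) ∧
    ¬ DifferentiableAt ℝ (Psi q) (xs, xs) := by
  obtain ⟨v, hv⟩ := DFunLike.ne_iff.1 hM0
  have hAv : A v ≠ 0 := (map_ne_zero_iff A hAinv.1).2 fun h => hv (by simp [h])
  have hdefect : ((M v, v) : E n × E n) ≠ (0, v) + (0, 0) := by simpa using hv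
  refine ⟨not_exists_linearMap_of_apply_ne (v := v) ?_, fun hdiff => ?_⟩
  · rwa [GMap_self, GMap_zero_right M A hAv, GMap_zero_left]
  have hL := hdiff.hasFDerivAt.hasLineDerivAt
  refine not_exists_linearMap_of_apply_ne (F := fderiv ℝ (Psi q) (xs, xs)) (v := v) ?_
    ⟨(fderiv ℝ (Psi q) (xs, xs)).toLinearMap, fun _ => rfl⟩
  rwa [(hL _).unique (hasLineDerivAt_Psi_self hM v),
    (hL _).unique (hasLineDerivAt_Psi_zero_right hfix hM (hA ▸ hAv)),
    (hL _).unique (hasLineDerivAt_Psi_zero_left hfix v)]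
end
end
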